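/- arXiv:2410.20694 — 7 statements merged into one kernel-verified Lean document; each statement's English description precedes it below -/
import Mathlib

section
/- Let n ≥ 1 and let K ⊂ ℝⁿ be a convex body. Then there exists a constant C = C(K) > 0 such that for every convex body P ⊆ K and every integer k ≥ 1, one has #(P ∩ ℤⁿ/k) ≤ |P|·kⁿ + C·k^{n−1}. -/
open MeasureTheory Set

/-- The rescaled lattice `ℤⁿ/k` inside `ℝⁿ`. -/
def lpts (n k : ℕ) : Set (EuclideanSpace ℝ (Fin n)) :=
  {x | ∀ i, ∃ m : ℤ, (k : ℝ) * x i = (m : ℝ)}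

/-!
The half-open cubes `x + [0, 1/k)ⁿ` at the points `x` of `P ∩ ℤⁿ/k` are pairwise disjoint and lie
in `P + [0, 1/k]ⁿ`, so `#(P ∩ ℤⁿ/k) ≤ kⁿ |P + [0, 1/k]ⁿ|`. Add the cube to `P` one edge
`[0, 1/k] eⱼ` at a time. By Fubini along the `j`-th coordinate, each step enlarges the volume by
at most `1/k` times the volume of the shadow of the current body, since every slice of a convex
body parallel to `eⱼ` is an interval, which the edge lengthens by `1/k`. If `K ⊆ [-B, B]ⁿ`, the
shadows lie in `[-B-1, B+1]ⁿ⁻¹`, so `|P + [0, 1/k]ⁿ| ≤ |P| + n (2B + 2)ⁿ⁻¹ / k`.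
-/

open Metric
open scoped Pointwise ENNReal

theorem Set.Icc_zero_add_subset {α : Type*} [AddCommGroup α] [Lattice α] [IsOrderedAddMonoid α]
    {a b : α} (ha : 0 ≤ a) (hb : 0 ≤ b) : Icc 0 (a + b) ⊆ Icc 0 a + Icc 0 b := by
  rintro x ⟨hx0, hxab⟩
  refine ⟨x ⊓ a, ⟨le_inf hx0 ha, inf_le_right⟩, x - x ⊓ a, ⟨sub_nonneg.2 inf_le_left, ?_⟩,
    add_sub_cancel _ _⟩
  rw [sub_le_iff_le_add, add_inf]
  exact le_inf (le_add_of_nonneg_left hb) (by rwa [add_comm])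

theorem Real.volume_add_Icc_zero_le {F : Set ℝ} (hFc : IsCompact F) (hF : Convex ℝ F) {ε : ℝ}
    (hε : 0 ≤ ε) : volume (F + Icc 0 ε) ≤ volume F + ENNReal.ofReal ε := by
  rcases F.eq_empty_or_nonempty with rfl | hFne
  · simp
  have hF_eq : F = Icc (sInf F) (sSup F) :=
    eq_Icc_of_connected_compact ⟨hFne, hF.isPreconnected⟩ hFc
  have hle : sInf F ≤ sSup F := csInf_le_csSup hFne hFc.bddBelow hFc.bddAbove
  rw [hF_eq, Icc_add_Icc hle hε, Real.volume_Icc, Real.volume_Icc,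
    ← ENNReal.ofReal_add (sub_nonneg.2 hle) hε]
  exact ENNReal.ofReal_le_ofReal (by linarith)

namespace Fin

variable {m : ℕ} (j : Fin (m + 1))

theorem volume_eq_lintegral_volume_insertNth_preimage {S : Set (Fin (m + 1) → ℝ)}
    (hS : MeasurableSet S) :
    volume S = ∫⁻ ω : Fin m → ℝ, volume ((j.insertNth · ω) ⁻¹' S) := by
  have e := (volume_preserving_piFinSuccAbove (fun _ : Fin (m + 1) => ℝ) j).symm
  rw [← e.measure_preimage_equiv S, Measure.volume_eq_prod,
    Measure.prod_apply_symm (hS.preimage (MeasurableEquiv.measurable _))]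
  rfl

theorem isometry_insertNth (ω : Fin m → ℝ) : Isometry (j.insertNth · ω : ℝ → Fin (m + 1) → ℝ) :=
  Isometry.of_dist_eq fun s t => by simp [Fin.dist_insertNth_insertNth]

theorem insertNth_add_single (t s : ℝ) (ω : Fin m → ℝ) :
    j.insertNth (α := fun _ => ℝ) t ω + Pi.single j s = j.insertNth (t + s) ω := by
  rw [← insertNth_zero_right, ← insertNth_add, add_zero]

theorem preimage_insertNth_add_Icc_single (A : Set (Fin (m + 1) → ℝ)) (ω : Fin m → ℝ) (ε : ℝ) :
    (j.insertNth · ω) ⁻¹' (A + Icc 0 (Pi.single j ε)) = (j.insertNth · ω) ⁻¹' A + Icc 0 ε := by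
  rw [← Pi.single_zero j, ← image_single_Icc]
  ext t
  constructor
  · rintro ⟨a, ha, _, ⟨s, hs, rfl⟩, hat⟩
    refine ⟨t - s, ?_, s, hs, sub_add_cancel t s⟩
    have : a = j.insertNth (t - s) ω := by
      rw [← add_left_inj (Pi.single j s), insertNth_add_single, sub_add_cancel]; exact hat
    rwa [mem_preimage, ← this]
  · rintro ⟨t₀, ht₀, s, hs, rfl⟩
    exact ⟨_, ht₀, _, ⟨s, hs, rfl⟩, insertNth_add_single j t₀ s ω⟩

theorem insertNth_eq_lineMap (ω : Fin m → ℝ) (t : ℝ) :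
    j.insertNth (α := fun _ => ℝ) t ω =
      AffineMap.lineMap (j.insertNth (α := fun _ => ℝ) 0 ω) (j.insertNth 1 ω) t := by
  ext i
  refine j.succAboveCases ?_ (fun i => ?_) i <;> simp [AffineMap.lineMap_apply]

theorem convex_preimage_insertNth {A : Set (Fin (m + 1) → ℝ)} (hA : Convex ℝ A) (ω : Fin m → ℝ) :
    Convex ℝ ((j.insertNth · ω) ⁻¹' A) := by
  have hline : (j.insertNth · ω : ℝ → Fin (m + 1) → ℝ) = AffineMap.lineMap _ _ :=
    funext (insertNth_eq_lineMap j ω)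
  rw [hline]
  exact hA.affine_preimage _

end Fin

open Fin in
theorem volume_add_Icc_single_le {m : ℕ} (j : Fin (m + 1)) {A : Set (Fin (m + 1) → ℝ)}
    (hA : Convex ℝ A)
    (hAc : IsCompact A) {R ε : ℝ} (hAR : A ⊆ closedBall 0 R) (hε : 0 ≤ ε) :
    volume (A + Icc 0 (Pi.single j ε)) ≤
      volume A + ENNReal.ofReal ε * volume (closedBall (0 : Fin m → ℝ) R) := by
  have hslice : ∀ ω : Fin m → ℝ,
      volume ((j.insertNth · ω) ⁻¹' (A + Icc 0 (Pi.single j ε))) ≤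
        volume ((j.insertNth · ω) ⁻¹' A) +
          (closedBall 0 R).indicator (fun _ => ENNReal.ofReal ε) ω := by
    intro ω
    rw [preimage_insertNth_add_Icc_single]
    rcases ((j.insertNth · ω) ⁻¹' A).eq_empty_or_nonempty with hF | ⟨t, ht⟩
    · simp [hF]
    have hω : ω ∈ closedBall 0 R := by
      have h : j.insertNth (α := fun _ => ℝ) t ω ∈ closedBall 0 R := hAR ht
      have h0 : (0 : Fin (m + 1) → ℝ) = j.insertNth 0 0 := by simp
      rw [mem_closedBall, h0, dist_insertNth_insertNth] at h
      exact mem_closedBall.2 ((le_max_right _ _).trans h)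
    rw [indicator_of_mem hω]
    exact Real.volume_add_Icc_zero_le
      ((isometry_insertNth j ω).isClosedEmbedding.isCompact_preimage hAc)
      (convex_preimage_insertNth j hA ω) hε
  have hmeas : MeasurableSet (A + Icc 0 (Pi.single j ε)) :=
    (hAc.add isCompact_Icc).measurableSet
  calc volume (A + Icc 0 (Pi.single j ε))
      = ∫⁻ ω, volume ((j.insertNth · ω) ⁻¹' (A + Icc 0 (Pi.single j ε))) :=
        volume_eq_lintegral_volume_insertNth_preimage j hmeas
    _ ≤ ∫⁻ ω, (volume ((j.insertNth · ω) ⁻¹' A) +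
          (closedBall 0 R).indicator (fun _ => ENNReal.ofReal ε) ω) := lintegral_mono hslice
    _ = volume A + ENNReal.ofReal ε * volume (closedBall (0 : Fin m → ℝ) R) := by
        rw [lintegral_add_right _ (measurable_const.indicator measurableSet_closedBall),
          lintegral_indicator_const measurableSet_closedBall,
          ← volume_eq_lintegral_volume_insertNth_preimage j hAc.measurableSet]

theorem Icc_zero_subset_closedBall {ι : Type*} [Fintype ι] {r : ι → ℝ} {ε : ℝ} (hε : 0 ≤ ε)
    (hr : ∀ i, r i ≤ ε) : Icc 0 r ⊆ closedBall 0 ε := fun c hc =>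
  mem_closedBall_zero_iff.2 <| (pi_norm_le_iff_of_nonneg hε).2 fun i => by
    rw [Real.norm_eq_abs, abs_of_nonneg (hc.1 i)]
    exact (hc.2 i).trans (hr i)

theorem volume_add_Icc_sum_single_le {m : ℕ} {P : Set (Fin (m + 1) → ℝ)} (hP : Convex ℝ P)
    (hPc : IsCompact P) {B ε : ℝ} (hB : 0 ≤ B) (hε : 0 ≤ ε) (hPB : P ⊆ closedBall 0 B)
    (s : Finset (Fin (m + 1))) :
    volume (P + Icc 0 (∑ j ∈ s, Pi.single j ε)) ≤
      volume P + s.card * ENNReal.ofReal (ε * (2 * (B + ε)) ^ m) := by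
  induction s using Finset.induction_on with
  | empty => simp
  | @insert j s hj ih =>
    set Q := P + Icc 0 (∑ i ∈ s, Pi.single i ε)
    have hsum_le : ∀ i, (∑ i ∈ s, Pi.single i ε) i ≤ ε := fun i => by
      rw [Finset.sum_apply, Finset.sum_pi_single i (fun _ => ε)]
      split_ifs <;> linarith
    have hQB : Q ⊆ closedBall 0 (B + ε) := by
      refine (add_subset_add hPB (Icc_zero_subset_closedBall hε hsum_le)).trans ?_
      rw [closedBall_add_closedBall hB hε, add_zero]
    have hQ_add : P + Icc 0 (∑ i ∈ insert j s, Pi.single i ε) ⊆ Q + Icc 0 (Pi.single j ε) := by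
      rw [Finset.sum_insert hj, add_comm (Pi.single j ε : Fin (m + 1) → ℝ), add_assoc]
      exact add_subset_add_left (Icc_zero_add_subset
        (Finset.sum_nonneg fun i _ => Pi.single_nonneg.2 hε) (Pi.single_nonneg.2 hε))
    calc volume (P + Icc 0 (∑ i ∈ insert j s, Pi.single i ε))
        ≤ volume Q + ENNReal.ofReal ε * volume (closedBall (0 : Fin m → ℝ) (B + ε)) :=
          (measure_mono hQ_add).trans <| volume_add_Icc_single_le j
            (hP.add (convex_Icc _ _)) (hPc.add isCompact_Icc) hQB hε
      _ ≤ volume P + s.card * ENNReal.ofReal (ε * (2 * (B + ε)) ^ m) +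
            ENNReal.ofReal (ε * (2 * (B + ε)) ^ m) := by
          rw [Real.volume_pi_closedBall _ (by linarith), Fintype.card_fin,
            ← ENNReal.ofReal_mul hε]
          gcongr
      _ = volume P + (insert j s).card * ENNReal.ofReal (ε * (2 * (B + ε)) ^ m) := by
          rw [Finset.card_insert_of_notMem hj, add_assoc, Nat.cast_succ, add_one_mul]

def scaledIntLattice (ι : Type*) (k : ℕ) : Set (ι → ℝ) :=
  {x | ∀ i, ∃ m : ℤ, (k : ℝ) * x i = m}

def latticeCell {ι : Type*} (k : ℕ) (x : ι → ℝ) : Set (ι → ℝ) :=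
  univ.pi fun i => Ico (x i) (x i + (k : ℝ)⁻¹)

section LatticeCell

variable {ι : Type*} {k : ℕ}

theorem floor_mul_eq_of_mem_latticeCell (hk : 0 < k) {x p : ι → ℝ}
    (hx : x ∈ scaledIntLattice ι k) (hp : p ∈ latticeCell k x) (i : ι) :
    (⌊(k : ℝ) * p i⌋ : ℝ) = k * x i := by
  obtain ⟨z, hz⟩ := hx i
  have hk' : (0 : ℝ) < k := Nat.cast_pos.2 hk
  obtain ⟨h₁, h₂⟩ := hp i (mem_univ i)
  rw [hz, Int.cast_inj, Int.floor_eq_iff, ← hz]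
  constructor
  · exact mul_le_mul_of_nonneg_left h₁ hk'.le
  · calc (k : ℝ) * p i < k * (x i + (k : ℝ)⁻¹) := mul_lt_mul_of_pos_left h₂ hk'
      _ = k * x i + 1 := by rw [mul_add, mul_inv_cancel₀ hk'.ne']

theorem pairwiseDisjoint_latticeCell (hk : 0 < k) :
    (scaledIntLattice ι k).PairwiseDisjoint (latticeCell k) := by
  intro x hx y hy hxy
  refine disjoint_left.2 fun p hpx hpy => hxy (funext fun i => ?_)
  have h := (floor_mul_eq_of_mem_latticeCell hk hx hpx i).symm.trans
    (floor_mul_eq_of_mem_latticeCell hk hy hpy i)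
  exact mul_left_cancel₀ (Nat.cast_ne_zero.2 hk.ne') h

theorem latticeCell_subset_add_Icc {P : Set (ι → ℝ)} {x : ι → ℝ} (hx : x ∈ P) :
    latticeCell k x ⊆ P + Icc 0 (fun _ => (k : ℝ)⁻¹) := fun p hp =>
  ⟨x, hx, p - x, ⟨fun i => sub_nonneg.2 (hp i (mem_univ i)).1,
    fun i => sub_le_iff_le_add'.2 (hp i (mem_univ i)).2.le⟩, add_sub_cancel x p⟩

variable [Fintype ι]

theorem volume_latticeCell (k : ℕ) (x : ι → ℝ) :
    volume (latticeCell k x) = ENNReal.ofReal (k : ℝ)⁻¹ ^ Fintype.card ι := by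
  simp [latticeCell, volume_pi_pi, Real.volume_Ico]

theorem ncard_inter_scaledIntLattice_mul_le (hk : 0 < k) (P : Set (ι → ℝ)) :
    (P ∩ scaledIntLattice ι k).ncard * ENNReal.ofReal (k : ℝ)⁻¹ ^ Fintype.card ι ≤
      volume (P + Icc 0 (fun _ => (k : ℝ)⁻¹)) := by
  by_cases hfin : (P ∩ scaledIntLattice ι k).Finite
  swap
  · simp [Set.Infinite.ncard hfin]
  rw [ncard_eq_toFinset_card _ hfin]
  calc (hfin.toFinset.card : ℝ≥0∞) * ENNReal.ofReal (k : ℝ)⁻¹ ^ Fintype.card ι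
      = ∑ x ∈ hfin.toFinset, volume (latticeCell k x) := by
        simp [volume_latticeCell]
    _ = volume (⋃ x ∈ hfin.toFinset, latticeCell k x) := by
        refine (measure_biUnion_finset ?_ fun x _ =>
          MeasurableSet.univ_pi fun _ => measurableSet_Ico).symm
        exact (pairwiseDisjoint_latticeCell hk).subset fun x hx =>
          ((hfin.mem_toFinset).1 hx).2
    _ ≤ volume (P + Icc 0 (fun _ => (k : ℝ)⁻¹)) :=
        measure_mono <| iUnion₂_subset fun x hx =>
          latticeCell_subset_add_Icc ((hfin.mem_toFinset).1 hx).1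

end LatticeCell

theorem ncard_inter_scaledIntLattice_le {m k : ℕ} (hk : 0 < k) {P : Set (Fin (m + 1) → ℝ)}
    (hP : Convex ℝ P) (hPc : IsCompact P) {B : ℝ} (hB : 0 ≤ B) (hPB : P ⊆ closedBall 0 B) :
    ((P ∩ scaledIntLattice (Fin (m + 1)) k).ncard : ℝ) ≤
      (volume P).toReal * k ^ (m + 1) + (m + 1) * (2 * (B + 1)) ^ m * k ^ m := by
  set ε : ℝ := (k : ℝ)⁻¹ with hε_def
  have hk' : (0 : ℝ) < k := Nat.cast_pos.2 hk
  have hε : 0 < ε := inv_pos.2 hk'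
  have hε1 : ε ≤ 1 := inv_le_one_of_one_le₀ (Nat.one_le_cast.2 hk)
  have hcount := ncard_inter_scaledIntLattice_mul_le hk P
  rw [← Finset.univ_sum_single (fun _ => ε)] at hcount
  have h := hcount.trans (volume_add_Icc_sum_single_le hP hPc hB hε.le hPB Finset.univ)
  set N := (P ∩ scaledIntLattice (Fin (m + 1)) k).ncard
  have hreal : N * ε ^ (m + 1) ≤ (volume P).toReal + (m + 1) * (ε * (2 * (B + ε)) ^ m) := by
    rw [← ENNReal.ofReal_le_ofReal_iff (by positivity),
      ENNReal.ofReal_add ENNReal.toReal_nonneg (by positivity),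
      ENNReal.ofReal_toReal hPc.measure_lt_top.ne, ENNReal.ofReal_mul (by positivity),
      ENNReal.ofReal_mul (by positivity), ENNReal.ofReal_pow hε.le, ← Nat.cast_succ, ENNReal.ofReal_natCast, ENNReal.ofReal_natCast]
    simpa using h
  calc (N : ℝ) = N * ε ^ (m + 1) * k ^ (m + 1) := by
        rw [mul_assoc, ← mul_pow, inv_mul_cancel₀ hk'.ne', one_pow, mul_one]
    _ ≤ ((volume P).toReal + (m + 1) * (ε * (2 * (B + ε)) ^ m)) * k ^ (m + 1) := by gcongr
    _ = (volume P).toReal * k ^ (m + 1) + (m + 1) * (2 * (B + ε)) ^ m * k ^ m := by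
        rw [pow_succ, hε_def]
        field_simp
    _ ≤ (volume P).toReal * k ^ (m + 1) + (m + 1) * (2 * (B + 1)) ^ m * k ^ m := by gcongr

theorem ncard_inter_lpts (n k : ℕ) (P : Set (EuclideanSpace ℝ (Fin n))) :
    (P ∩ lpts n k).ncard = (WithLp.ofLp '' P ∩ scaledIntLattice (Fin n) k).ncard := by
  rw [← image_inter_preimage, ncard_image_of_injective _ (WithLp.ofLp_injective 2)]
  rfl

theorem EuclideanSpace.volume_image_ofLp {ι : Type*} [Fintype ι] (P : Set (EuclideanSpace ℝ ι)) :
    volume (WithLp.ofLp '' P) = volume P := by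
  have h := (EuclideanSpace.volume_preserving_symm_measurableEquiv_toLp ι).symm
  rw [← h.measure_preimage_equiv P, ← MeasurableEquiv.image_symm]
  rfl

theorem stmt2_general (n : ℕ) (hn : 1 ≤ n) (K : Set (EuclideanSpace ℝ (Fin n)))
    (hKcp : IsCompact K) :
    ∃ C : ℝ, 0 < C ∧ ∀ P : Set (EuclideanSpace ℝ (Fin n)),
      P ⊆ K → P.Nonempty → IsCompact P → Convex ℝ P →
      ∀ k : ℕ, 1 ≤ k →
        ((P ∩ lpts n k).ncard : ℝ)
          ≤ (volume P).toReal * (k : ℝ) ^ n + C * (k : ℝ) ^ (n - 1) := by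
  obtain ⟨m, rfl⟩ : ∃ m, n = m + 1 := ⟨n - 1, by omega⟩
  obtain ⟨R, hR⟩ := ((hKcp.image (PiLp.continuous_ofLp 2 _)).isBounded).subset_closedBall 0
  set B := max R 0
  refine ⟨(m + 1) * (2 * (B + 1)) ^ m, by positivity, fun P hPK _ hPc hPcv k hk => ?_⟩
  have hPB : WithLp.ofLp '' P ⊆ closedBall 0 B :=
    (image_mono hPK).trans (hR.trans (closedBall_subset_closedBall (le_max_left R 0)))
  have hcount := ncard_inter_scaledIntLattice_le hk
    (hPcv.linear_image (WithLp.linearEquiv 2 ℝ _).toLinearMap)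
    (hPc.image (PiLp.continuous_ofLp 2 _)) (le_max_right R 0) hPB
  rw [ncard_inter_lpts, ← EuclideanSpace.volume_image_ofLp, add_tsub_cancel_right]
  exact hcount

theorem stmt2 (n : ℕ) (hn : 1 ≤ n) (K : Set (EuclideanSpace ℝ (Fin n)))
    (hKne : K.Nonempty) (hKcp : IsCompact K) (hKcv : Convex ℝ K) :
    ∃ C : ℝ, 0 < C ∧ ∀ P : Set (EuclideanSpace ℝ (Fin n)),
      P ⊆ K → P.Nonempty → IsCompact P → Convex ℝ P →
      ∀ k : ℕ, 1 ≤ k →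
        ((P ∩ lpts n k).ncard : ℝ)
          ≤ (volume P).toReal * (k : ℝ) ^ n + C * (k : ℝ) ^ (n - 1) :=
  stmt2_general n hn K hKcp
end

section
/- Let n ≥ 1, let K ⊂ ℝⁿ be a convex body and let ν ∈ (0, |K|]. Then there exists a constant C = C(ν, K) > 0 such that for every convex body P ⊆ K with |P| ≥ ν and every integer k ≥ 1, one has #(P ∩ ℤⁿ/k) ≥ (1 − C/k)·|P|·kⁿ. -/
open MeasureTheory Set

/-!
By Blaschke selection, the convex bodies `P ⊆ K` with `|P| ≥ ν` form a compact family for the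
Hausdorff metric. Each of them has positive volume, hence nonempty interior, and a ball inscribed
in a convex body stays (slightly shrunk) inscribed in every convex body Hausdorff-close to it; so
all of them contain balls of one radius `r > 0`.

If `P` contains a ball of radius `r` about `c`, shrinking `P` about `c` by the factor
`1 - √n / (r k)` gives a set `Q` whose points are at distance `√n / k` from the complement of `P`.
Rounding a point of `Q` down to `ℤⁿ/k` moves it by at most `√n / k`, so `Q` is covered by the cubes
of side `1 / k` at the lattice points of `P`, and `#(P ∩ ℤⁿ/k) ≥ (1 - √n / (r k))ⁿ |P| kⁿ`.
Bernoulli's inequality then gives the theorem with `C = n √n / r`.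
-/

open Metric TopologicalSpace

section ConvexGeometry

variable {E : Type*} [NormedAddCommGroup E]

theorem Convex.interior_nonempty_of_measure_ne_zero [NormedSpace ℝ E] [MeasurableSpace E]
    [BorelSpace E] [FiniteDimensional ℝ E] (μ : Measure E) [μ.IsAddHaarMeasure] {s : Set E}
    (hs : Convex ℝ s) (h : μ s ≠ 0) : (interior s).Nonempty := by
  rw [nonempty_iff_ne_empty]
  intro hint
  refine h (measure_mono_null (fun x hx => ?_) (hs.addHaar_frontier μ))
  rw [frontier, hint, sdiff_empty]
  exact subset_closure hx

theorem Convex.closedBall_subset_of_mem_image_homothety [NormedSpace ℝ E] {s : Set E}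
    (hs : Convex ℝ s) {c : E} {r t : ℝ} (hball : closedBall c r ⊆ s) (ht₀ : 0 ≤ t) (ht₁ : t ≤ 1)
    {x : E} (hx : x ∈ AffineMap.homothety c (1 - t) '' s) : closedBall x (t * r) ⊆ s := by
  obtain ⟨p, hp, rfl⟩ := hx
  rcases ht₀.eq_or_lt with rfl | ht₀
  · simpa using hp
  intro y hy
  have hq : c + t⁻¹ • (y - AffineMap.homothety c (1 - t) p) ∈ s := by
    refine hball (mem_closedBall_iff_norm.2 ?_)
    rw [add_sub_cancel_left, norm_smul, Real.norm_eq_abs, abs_inv, abs_of_pos ht₀,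
      inv_mul_le_iff₀ ht₀, ← dist_eq_norm]
    exact hy
  convert hs hp hq (sub_nonneg.2 ht₁) ht₀.le (sub_add_cancel 1 t) using 1
  rw [AffineMap.homothety_apply, vsub_eq_sub, vadd_eq_add, smul_add, smul_smul,
    mul_inv_cancel₀ ht₀.ne', one_smul]
  module

theorem Convex.closedBall_subset_of_closedBall_subset_thickening [InnerProductSpace ℝ E]
    [CompleteSpace E] {s : Set E} (hs : Convex ℝ s) (hsc : IsClosed s) {c : E} {r δ : ℝ}
    (hδ : 0 ≤ δ) (h : closedBall c (r + δ) ⊆ Metric.thickening δ s) : closedBall c r ⊆ s := by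
  intro y hy
  by_contra hys
  obtain ⟨f, u, hfs, hfy⟩ := geometric_hahn_banach_closed_point hs hsc hys
  set w := (InnerProductSpace.toDual ℝ E).symm f
  have hw : ∀ v, inner ℝ w v = f v := fun v => InnerProductSpace.toDual_symm_apply
  have hr : 0 ≤ r + δ := add_nonneg (dist_nonneg.trans (mem_closedBall.1 hy)) hδ
  -- the point of the big ball farthest in the direction `w`
  set z := c + ((r + δ) / ‖w‖) • w
  have hz : z ∈ closedBall c (r + δ) := by
    rw [mem_closedBall_iff_norm, add_sub_cancel_left, norm_smul, Real.norm_of_nonneg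
      (div_nonneg hr (norm_nonneg w))]
    rcases eq_or_ne ‖w‖ 0 with hw0 | hw0
    · simp [hw0, hr]
    · rw [div_mul_cancel₀ _ hw0]
  obtain ⟨a, ha, hza⟩ := mem_thickening_iff.1 (h hz)
  have hwz : inner ℝ w z = inner ℝ w c + (r + δ) * ‖w‖ := by
    rw [inner_add_right, real_inner_smul_right, real_inner_self_eq_norm_sq]
    rcases eq_or_ne ‖w‖ 0 with hw0 | hw0
    · simp [hw0]
    · field_simp
  have hwa : inner ℝ w z - inner ℝ w a ≤ ‖w‖ * δ := by
    rw [← inner_sub_right]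
    refine (real_inner_le_norm _ _).trans (mul_le_mul_of_nonneg_left ?_ (norm_nonneg w))
    rw [← dist_eq_norm]
    exact hza.le
  have hwy : inner ℝ w y - inner ℝ w c ≤ ‖w‖ * r := by
    rw [← inner_sub_right]
    refine (real_inner_le_norm _ _).trans (mul_le_mul_of_nonneg_left ?_ (norm_nonneg w))
    rw [← dist_eq_norm]
    exact hy
  have := hfs a ha
  rw [← hw] at this hfy
  linarith

end ConvexGeometry

namespace TopologicalSpace.NonemptyCompacts

variable {E : Type*}

theorem subset_thickening_of_dist_lt [MetricSpace E] {A B : NonemptyCompacts E} {δ : ℝ}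
    (h : dist A B < δ) : (A : Set E) ⊆ thickening δ (B : Set E) := by
  intro x hx
  obtain ⟨y, hy, hxy⟩ := exists_dist_lt_of_hausdorffDist_lt hx h
    (hausdorffEDist_ne_top_of_nonempty_of_bounded A.nonempty B.nonempty A.isCompact.isBounded
      B.isCompact.isBounded)
  exact mem_thickening_iff.2 ⟨y, hy, hxy⟩

theorem isClosed_setOf_convex [NormedAddCommGroup E] [NormedSpace ℝ E] :
    IsClosed {A : NonemptyCompacts E | Convex ℝ (A : Set E)} := by
  refine isClosed_of_closure_subset fun L hL x hx y hy a b ha hb hab => ?_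
  rw [← L.isCompact.isClosed.closure_eq, closure_eq_iInter_thickening]
  refine mem_iInter₂.2 fun ε hε => ?_
  obtain ⟨A, hA : Convex ℝ (A : Set E), hLA⟩ := Metric.mem_closure_iff.1 hL (ε / 2) (half_pos hε)
  have hAL : (A : Set E) ⊆ thickening (ε / 2) (L : Set E) :=
    subset_thickening_of_dist_lt (by rwa [dist_comm])
  have hz : a • x + b • y ∈ thickening (ε / 2) (A : Set E) :=
    hA.thickening (ε / 2) (subset_thickening_of_dist_lt hLA hx)
      (subset_thickening_of_dist_lt hLA hy) ha hb hab
  have := thickening_thickening_subset (ε / 2) (ε / 2) (L : Set E)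
    (thickening_subset_of_subset (ε / 2) hAL hz)
  rwa [add_halves] at this

theorem isClosed_setOf_le_measure [MetricSpace E] [ProperSpace E] [MeasurableSpace E]
    [OpensMeasurableSpace E] (μ : Measure E) [IsFiniteMeasureOnCompacts μ] (ν : ENNReal) :
    IsClosed {A : NonemptyCompacts E | ν ≤ μ A} := by
  refine isClosed_of_closure_subset fun L hL => ?_
  refine ge_of_tendsto ((tendsto_measure_cthickening_of_isCompact L.isCompact).mono_left
    (nhdsWithin_le_nhds (s := Ioi 0))) ?_
  filter_upwards [self_mem_nhdsWithin] with δ (hδ : 0 < δ)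
  obtain ⟨A, hA : ν ≤ μ A, hLA⟩ := Metric.mem_closure_iff.1 hL δ hδ
  have hAL : (A : Set E) ⊆ thickening δ (L : Set E) :=
    subset_thickening_of_dist_lt (by rwa [dist_comm])
  exact hA.trans (measure_mono (hAL.trans (thickening_subset_cthickening δ _)))

end TopologicalSpace.NonemptyCompacts

theorem exists_pos_forall_closedBall_subset {E : Type*} [NormedAddCommGroup E]
    [InnerProductSpace ℝ E] [FiniteDimensional ℝ E] [MeasurableSpace E] [BorelSpace E]
    (μ : Measure E) [μ.IsAddHaarMeasure] {K : Set E} (hK : IsCompact K) {ν : ENNReal}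
    (hν : ν ≠ 0) :
    ∃ r > 0, ∀ P ⊆ K, IsCompact P → Convex ℝ P → ν ≤ μ P → ∃ c, closedBall c r ⊆ P := by
  set S := {A : NonemptyCompacts E | (A : Set E) ⊆ K} ∩
    ({A | Convex ℝ (A : Set E)} ∩ {A | ν ≤ μ A})
  have hS : IsCompact S := (NonemptyCompacts.isCompact_subsets_of_isCompact hK).inter_right
    (NonemptyCompacts.isClosed_setOf_convex.inter (NonemptyCompacts.isClosed_setOf_le_measure μ ν))
  suffices ∃ r > 0, ∀ A ∈ S, ∃ c, closedBall c r ⊆ (A : Set E) by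
    obtain ⟨r, hr, hballS⟩ := this
    refine ⟨r, hr, fun P hPK hPc hPcv hνP => hballS ⟨⟨P, hPc⟩, ?_⟩ ⟨hPK, hPcv, hνP⟩⟩
    exact nonempty_of_measure_ne_zero (ne_bot_of_le_ne_bot hν hνP)
  refine hS.induction_on ⟨1, one_pos, by simp⟩
    (fun s t hst ⟨r, hr, ht⟩ => ⟨r, hr, fun A hA => ht A (hst hA)⟩)
    (fun s t ⟨r, hr, hs⟩ ⟨r', hr', ht⟩ => ⟨min r r', lt_min hr hr', ?_⟩)
    fun A ⟨_, hAcv, hνA⟩ => ?_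
  · rintro B (hB | hB)
    · obtain ⟨c, hc⟩ := hs B hB
      exact ⟨c, (closedBall_subset_closedBall (min_le_left r r')).trans hc⟩
    · obtain ⟨c, hc⟩ := ht B hB
      exact ⟨c, (closedBall_subset_closedBall (min_le_right r r')).trans hc⟩
  obtain ⟨c, hc⟩ := hAcv.interior_nonempty_of_measure_ne_zero μ (ne_bot_of_le_ne_bot hν hνA)
  obtain ⟨ε, hε, hball⟩ := isOpen_iff.1 isOpen_interior c hc
  refine ⟨S ∩ ball A (ε / 3), inter_mem_nhdsWithin S (ball_mem_nhds A (by positivity)),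
    ε / 3, by positivity, fun B ⟨⟨_, hBcv, _⟩, hBA⟩ => ⟨c, ?_⟩⟩
  refine hBcv.closedBall_subset_of_closedBall_subset_thickening B.isCompact.isClosed
    (δ := ε / 3) (by positivity) ?_
  calc closedBall c (ε / 3 + ε / 3) ⊆ ball c ε := closedBall_subset_ball (by linarith)
    _ ⊆ A := hball.trans interior_subset
    _ ⊆ thickening (ε / 3) B :=
      NonemptyCompacts.subset_thickening_of_dist_lt (by rwa [dist_comm, ← mem_ball])

theorem measure_preimage_le_ncard_mul {α β : Type*} [MeasurableSpace α] (μ : Measure α)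
    (f : α → β) {S : Set β} (hS : S.Finite) {c : ENNReal} (h : ∀ y ∈ S, μ (f ⁻¹' {y}) ≤ c) :
    μ (f ⁻¹' S) ≤ S.ncard * c := by
  rw [← hS.coe_toFinset, ← biUnion_preimage_singleton, ncard_coe_finset]
  refine (measure_biUnion_finset_le _ _).trans ?_
  rw [← nsmul_eq_mul]
  exact Finset.sum_le_card_nsmul _ _ _ fun y hy => h y (hS.mem_toFinset.1 hy)

section LatticePoints

variable {n k : ℕ}

theorem finite_inter_lpts (hk : k ≠ 0) {P : Set (EuclideanSpace ℝ (Fin n))}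
    (hP : Bornology.IsBounded P) : (P ∩ lpts n k).Finite := by
  obtain ⟨R, hR⟩ := hP.subset_closedBall 0
  set N := ⌈(k : ℝ) * R⌉
  refine ((Set.Finite.pi fun _ => finite_Icc (-N) N).image
    fun m : Fin n → ℤ => WithLp.toLp 2 fun i => (m i : ℝ) / k).subset ?_
  rintro x ⟨hxP, hx⟩
  choose m hm using hx
  have hk' : (0 : ℝ) < k := by positivity
  refine ⟨m, fun i _ => ?_, ?_⟩
  · have hxi : |x i| ≤ R :=
      (PiLp.norm_apply_le x i).trans (mem_closedBall_zero_iff.1 (hR hxP))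
    have : |(m i : ℝ)| ≤ N := by
      rw [← hm, abs_mul, Nat.abs_cast]
      exact (mul_le_mul_of_nonneg_left hxi hk'.le).trans (Int.le_ceil _)
    exact abs_le.1 (by exact_mod_cast this)
  · ext i
    simp [← hm, hk'.ne']

noncomputable def latticeFloor (n k : ℕ) (x : EuclideanSpace ℝ (Fin n)) :
    EuclideanSpace ℝ (Fin n) :=
  WithLp.toLp 2 fun i => ⌊(k : ℝ) * x i⌋ / k

theorem latticeFloor_mem_lpts (hk : k ≠ 0) (x : EuclideanSpace ℝ (Fin n)) :
    latticeFloor n k x ∈ lpts n k :=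
  fun i => ⟨⌊(k : ℝ) * x i⌋, mul_div_cancel₀ _ (Nat.cast_ne_zero.2 hk)⟩

theorem latticeFloor_apply_le (hk : k ≠ 0) (x : EuclideanSpace ℝ (Fin n)) (i : Fin n) :
    latticeFloor n k x i ≤ x i ∧ x i < latticeFloor n k x i + 1 / k := by
  have hk' : (0 : ℝ) < k := by positivity
  simp only [latticeFloor, PiLp.toLp_apply]
  rw [← add_div, div_le_iff₀' hk', lt_div_iff₀' hk']
  exact ⟨Int.floor_le _, Int.lt_floor_add_one _⟩

theorem dist_latticeFloor_le (hk : k ≠ 0) (x : EuclideanSpace ℝ (Fin n)) :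
    dist (latticeFloor n k x) x ≤ √n / k := by
  have hk' : (0 : ℝ) < k := by positivity
  have hcoord : ∀ i, dist (latticeFloor n k x i) (x i) ^ 2 ≤ (1 / k : ℝ) ^ 2 := by
    intro i
    obtain ⟨h1, h2⟩ := latticeFloor_apply_le hk x i
    refine pow_le_pow_left₀ dist_nonneg ?_ 2
    rw [Real.dist_eq, abs_le]
    constructor <;> linarith
  calc dist (latticeFloor n k x) x = √(∑ i, dist (latticeFloor n k x i) (x i) ^ 2) :=
        EuclideanSpace.dist_eq _ _
    _ ≤ √(∑ _i : Fin n, (1 / k : ℝ) ^ 2) :=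
        Real.sqrt_le_sqrt (Finset.sum_le_sum fun i _ => hcoord i)
    _ = √n / k := by
      rw [Finset.sum_const, Finset.card_univ, Fintype.card_fin, nsmul_eq_mul, Real.sqrt_mul
        (Nat.cast_nonneg n), Real.sqrt_sq (by positivity), mul_one_div]

theorem volume_preimage_latticeFloor_le (hk : k ≠ 0) (y : EuclideanSpace ℝ (Fin n)) :
    volume (latticeFloor n k ⁻¹' {y}) ≤ ENNReal.ofReal (1 / k) ^ n := by
  have hcube : latticeFloor n k ⁻¹' {y} ⊆ (MeasurableEquiv.toLp 2 (Fin n → ℝ)).symm ⁻¹'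
      univ.pi fun i => Ico (y i) (y i + 1 / k) := by
    rintro x rfl i -
    exact latticeFloor_apply_le hk x i
  refine (measure_mono hcube).trans_eq ?_
  rw [(EuclideanSpace.volume_preserving_symm_measurableEquiv_toLp (Fin n)).measure_preimage
    (MeasurableSet.univ_pi fun _ => measurableSet_Ico).nullMeasurableSet, volume_pi_pi]
  simp [Real.volume_Ico]

theorem one_sub_pow_mul_volume_le_ncard_inter_lpts {P : Set (EuclideanSpace ℝ (Fin n))}
    (hPc : IsCompact P) (hPcv : Convex ℝ P) {c : EuclideanSpace ℝ (Fin n)} {r : ℝ} (hr : 0 < r)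
    (hball : closedBall c r ⊆ P) (hk : k ≠ 0) (ht : √n / (r * k) ≤ 1) :
    (1 - √n / (r * k)) ^ n * (volume P).toReal * k ^ n ≤ (P ∩ lpts n k).ncard := by
  have hk' : (0 : ℝ) < k := by positivity
  set t := √n / (r * k)
  have ht₀ : 0 ≤ t := by positivity
  have htr : t * r = √n / k := by simp only [t]; field_simp
  have hfin := finite_inter_lpts hk hPc.isBounded
  have hcover : AffineMap.homothety c (1 - t) '' P ⊆ latticeFloor n k ⁻¹' (P ∩ lpts n k) :=
    fun x hx => ⟨hPcv.closedBall_subset_of_mem_image_homothety hball ht₀ ht hx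
      (by rw [mem_closedBall, htr]; exact dist_latticeFloor_le hk x), latticeFloor_mem_lpts hk x⟩
  have hvol : ENNReal.ofReal ((1 - t) ^ n) * volume P ≤
      (P ∩ lpts n k).ncard * ENNReal.ofReal (1 / k) ^ n := by
    calc ENNReal.ofReal ((1 - t) ^ n) * volume P
        = volume (AffineMap.homothety c (1 - t) '' P) := by
          rw [Measure.addHaar_image_homothety, finrank_euclideanSpace_fin,
            abs_of_nonneg (pow_nonneg (sub_nonneg.2 ht) n)]
      _ ≤ volume (latticeFloor n k ⁻¹' (P ∩ lpts n k)) := measure_mono hcover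
      _ ≤ _ := measure_preimage_le_ncard_mul _ _ hfin fun y _ =>
          volume_preimage_latticeFloor_le hk y
  have := ENNReal.toReal_mono (by finiteness) hvol
  rw [ENNReal.toReal_mul, ENNReal.toReal_mul, ENNReal.toReal_ofReal
    (pow_nonneg (sub_nonneg.2 ht) n), ENNReal.toReal_pow, ENNReal.toReal_ofReal (by positivity),
    ENNReal.toReal_natCast] at this
  calc (1 - t) ^ n * (volume P).toReal * k ^ n ≤ (P ∩ lpts n k).ncard * (1 / k) ^ n * k ^ n := by
        gcongr
    _ = (P ∩ lpts n k).ncard := by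
        rw [mul_assoc, ← mul_pow, one_div_mul_cancel hk'.ne', one_pow, mul_one]

end LatticePoints

theorem stmt3_general (n : ℕ) (hn : 1 ≤ n) (K : Set (EuclideanSpace ℝ (Fin n))) (hKcp : IsCompact K)
    (ν : ℝ) (hν : 0 < ν) :
    ∃ C : ℝ, 0 < C ∧ ∀ P : Set (EuclideanSpace ℝ (Fin n)),
      P ⊆ K → P.Nonempty → IsCompact P → Convex ℝ P → ν ≤ (volume P).toReal →
      ∀ k : ℕ, 1 ≤ k →
        (1 - C / (k : ℝ)) * (volume P).toReal * (k : ℝ) ^ n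
          ≤ ((P ∩ lpts n k).ncard : ℝ) := by
  obtain ⟨r, hr, hball⟩ := exists_pos_forall_closedBall_subset volume hKcp
    (ENNReal.ofReal_pos.2 hν).ne'
  refine ⟨n * √n / r, by positivity, fun P hPK _ hPc hPcv hνP k hk => ?_⟩
  obtain ⟨c, hc⟩ := hball P hPK hPc hPcv (ENNReal.ofReal_le_of_le_toReal hνP)
  have hCk : n * √n / r / k = n * (√n / (r * k)) := by ring
  rcases le_or_gt (√n / (r * k)) 1 with ht | ht
  · calc (1 - n * √n / r / k) * (volume P).toReal * k ^ n
        ≤ (1 - √n / (r * k)) ^ n * (volume P).toReal * k ^ n := by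
          gcongr
          rw [hCk, sub_eq_add_neg, sub_eq_add_neg, ← mul_neg]
          exact one_add_mul_le_pow (by linarith [show 0 ≤ √n / (r * k) by positivity]) n
      _ ≤ (P ∩ lpts n k).ncard :=
          one_sub_pow_mul_volume_le_ncard_inter_lpts hPc hPcv hr hc (by positivity) ht
  · have hC : 1 - n * √n / r / k ≤ 0 := by
      rw [hCk]
      nlinarith [show (1 : ℝ) ≤ n by exact_mod_cast hn]
    calc (1 - n * √n / r / k) * (volume P).toReal * k ^ n ≤ 0 :=
          mul_nonpos_of_nonpos_of_nonneg
            (mul_nonpos_of_nonpos_of_nonneg hC ENNReal.toReal_nonneg) (by positivity)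
      _ ≤ (P ∩ lpts n k).ncard := Nat.cast_nonneg _

theorem stmt3 (n : ℕ) (hn : 1 ≤ n) (K : Set (EuclideanSpace ℝ (Fin n)))
    (hKne : K.Nonempty) (hKcp : IsCompact K) (hKcv : Convex ℝ K)
    (ν : ℝ) (hν : 0 < ν) (hνK : ν ≤ (volume K).toReal) :
    ∃ C : ℝ, 0 < C ∧ ∀ P : Set (EuclideanSpace ℝ (Fin n)),
      P ⊆ K → P.Nonempty → IsCompact P → Convex ℝ P → ν ≤ (volume P).toReal →
      ∀ k : ℕ, 1 ≤ k →
        (1 - C / (k : ℝ)) * (volume P).toReal * (k : ℝ) ^ n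
          ≤ ((P ∩ lpts n k).ncard : ℝ) :=
  stmt3_general n hn K hKcp ν hν
end

section
/- Let n ≥ 1, let K ⊂ ℝⁿ be a convex body and let ν ∈ (0, |K|]. Then there exists r = r(ν, K) > 0 such that every convex body P ⊆ K with |P| ≥ ν contains a Euclidean ball of radius r, i.e., there exists p ∈ P with B(p, r) ⊆ P. -/
/-!
If `P` has volume at least `ν` and lies within distance `D` of a point `x₀ ∈ P`, it cannot lie in
a slab of half-width `h ≈ ν / D ^ (n - 1)`, so for every unit vector `v` some `y ∈ P` has
`|⟪v, y - x₀⟫| ≥ h`. Choosing `x₁, …, xₙ ∈ P` greedily, `xₖ` against a unit vector orthogonal to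
`x₁ - x₀, …, xₖ₋₁ - x₀`, and applying Gram–Schmidt to the `xᵢ - x₀` gives an orthonormal basis `b`
in which `⟪bⱼ, xᵢ - x₀⟫` is lower triangular, with diagonal entries of absolute value at least `h`
and all entries at most `D`. If the centroid `z` of `x₀, …, xₙ` were closer than `r` to the
boundary, separation would give a unit vector `u` with `⟪u, xᵢ - z⟫ < r` for all `i`. These
numbers sum to zero, so all are `O(n r)`, and solving the triangular system bounds the coordinates
of `u` by `O(n r (1 + D / h) ^ n / h)`, which contradicts `‖u‖ = 1` once `r` is small.
-/

open MeasureTheory Set Module RealInnerProductSpace InnerProductSpace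

theorem abs_le_card_mul_of_sum_eq_zero {ι : Type*} [Fintype ι] {t : ι → ℝ} {ρ : ℝ}
    (hρ : 0 ≤ ρ) (hsum : ∑ i, t i = 0) (ht : ∀ i, t i ≤ ρ) (i : ι) :
    |t i| ≤ Fintype.card ι * ρ := by
  classical
  have hρi : ρ ≤ Fintype.card ι * ρ :=
    le_mul_of_one_le_left hρ (Nat.one_le_cast.2 (Fintype.card_pos_iff.2 ⟨i⟩))
  have hrest : ∑ j ∈ Finset.univ.erase i, t j ≤ Fintype.card ι * ρ :=
    calc ∑ j ∈ Finset.univ.erase i, t j ≤ ∑ _j ∈ Finset.univ.erase i, ρ :=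
          Finset.sum_le_sum fun j _ => ht j
      _ ≤ ∑ _j : ι, ρ := Finset.sum_le_sum_of_subset_of_nonneg (Finset.erase_subset _ _)
          fun _ _ _ => hρ
      _ = Fintype.card ι * ρ := by simp
  rw [← Finset.add_sum_erase _ _ (Finset.mem_univ i)] at hsum
  exact abs_le.2 ⟨by linarith, (ht i).trans hρi⟩

theorem Fin.sum_Iio_pow {n : ℕ} (q : ℝ) (k : Fin n) :
    ∑ j ∈ Finset.Iio k, q ^ (j : ℕ) = ∑ i ∈ Finset.range k, q ^ i := by
  rw [← Nat.Iio_eq_range, ← Fin.map_valEmbedding_Iio, Finset.sum_map]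
  rfl

theorem abs_le_of_abs_sum_mul_le_of_lowerTriangular {n : ℕ} {a : Fin n → Fin n → ℝ}
    {c : Fin n → ℝ} {h D ε : ℝ} (hh : 0 < h)
    (hupper : ∀ i j, i < j → a i j = 0) (hdiag : ∀ i, h ≤ |a i i|) (hbound : ∀ i j, |a i j| ≤ D)
    (hc : ∀ i, |∑ j, a i j * c j| ≤ ε) (k : Fin n) :
    |c k| ≤ ε / h * (1 + D / h) ^ (k : ℕ) := by
  induction k using WellFoundedLT.induction with
  | _ k ih =>
  set q := 1 + D / h
  have hrow : ∑ j, a k j * c j = a k k * c k + ∑ j ∈ Finset.Iio k, a k j * c j := by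
    rw [← Finset.sum_cons (s := Finset.Iio k) (f := fun j => a k j * c j) Finset.notMem_Iio_self,
      ← Finset.Iic_eq_cons_Iio]
    exact (Finset.sum_subset (Finset.subset_univ _) fun j _ hj => by
      rw [hupper k j (not_le.1 (by simpa using hj)), zero_mul]).symm
  have hprev : |∑ j ∈ Finset.Iio k, a k j * c j| ≤ ε * (q ^ (k : ℕ) - 1) :=
    calc |∑ j ∈ Finset.Iio k, a k j * c j| ≤ ∑ j ∈ Finset.Iio k, D * (ε / h * q ^ (j : ℕ)) := by
          refine (Finset.abs_sum_le_sum_abs _ _).trans (Finset.sum_le_sum fun j hj => ?_)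
          rw [abs_mul]
          exact mul_le_mul (hbound k j) (ih j (Finset.mem_Iio.1 hj)) (abs_nonneg _)
            ((abs_nonneg _).trans (hbound k k))
      _ = ε * ((∑ i ∈ Finset.range k, q ^ i) * (q - 1)) := by
          rw [← Finset.mul_sum, ← Finset.mul_sum, Fin.sum_Iio_pow,
            show q - 1 = D / h from add_sub_cancel_left 1 _]
          field_simp
      _ = ε * (q ^ (k : ℕ) - 1) := by rw [geom_sum_mul]
  have hdiagk : h * |c k| ≤ ε * q ^ (k : ℕ) :=
    calc h * |c k| ≤ |a k k * c k| := by rw [abs_mul]; gcongr; exact hdiag k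
      _ = |∑ j, a k j * c j - ∑ j ∈ Finset.Iio k, a k j * c j| := by
          rw [hrow, add_sub_cancel_right]
      _ ≤ |∑ j, a k j * c j| + |∑ j ∈ Finset.Iio k, a k j * c j| := abs_sub _ _
      _ ≤ ε * q ^ (k : ℕ) := by linarith [hc k]
  rw [div_mul_eq_mul_div, le_div_iff₀ hh]
  linarith

theorem closedBall_subset_of_forall_le_inner {E : Type*} [NormedAddCommGroup E]
    [InnerProductSpace ℝ E] [CompleteSpace E] {S : Set E} (hS : Convex ℝ S) (hSc : IsClosed S)
    (hSne : S.Nonempty) {z : E} {r : ℝ} (H : ∀ u : E, ‖u‖ = 1 → ∃ s ∈ S, r ≤ ⟪u, s - z⟫) :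
    Metric.closedBall z r ⊆ S := by
  intro y hy
  by_contra hyS
  obtain ⟨f, c, hfS, hfy⟩ := geometric_hahn_banach_closed_point hS hSc hyS
  set v : E := (InnerProductSpace.toDual ℝ E).symm f
  have hvf : ∀ w, ⟪v, w⟫ = f w := fun w => InnerProductSpace.toDual_symm_apply
  have hv : v ≠ 0 := by
    intro hv
    obtain ⟨s, hs⟩ := hSne
    have := (hfS s hs).trans hfy
    rw [← hvf, ← hvf, hv, inner_zero_left, inner_zero_left] at this
    exact lt_irrefl _ this
  have hv' : 0 < ‖v‖ := norm_pos_iff.2 hv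
  obtain ⟨s, hs, hrs⟩ := H (‖v‖⁻¹ • v) (by simp [norm_smul, hv'.ne'])
  rw [real_inner_smul_left, le_inv_mul_iff₀ hv'] at hrs
  have hyz : ⟪v, y - z⟫ ≤ ‖v‖ * r :=
    (real_inner_le_norm _ _).trans (mul_le_mul_of_nonneg_left (mem_closedBall_iff_norm.1 hy) hv'.le)
  rw [inner_sub_right, hvf, hvf] at hrs hyz
  linarith [hfS s hs]

theorem exists_closedBall_subset_of_lowerTriangular {E : Type*} [NormedAddCommGroup E]
    [InnerProductSpace ℝ E] [CompleteSpace E] {S : Set E} (hS : Convex ℝ S) (hSc : IsClosed S)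
    {m : ℕ} (b : OrthonormalBasis (Fin m) ℝ E) {x₀ : E} (hx₀ : x₀ ∈ S) {x : Fin m → E}
    (hx : ∀ i, x i ∈ S) {h D : ℝ} (hh : 0 < h) (hD₀ : 0 ≤ D) (hD : ∀ i, ‖x i - x₀‖ ≤ D)
    (hdiag : ∀ i, h ≤ |⟪b i, x i - x₀⟫|) (hupper : ∀ i j, i < j → ⟪b j, x i - x₀⟫ = 0) :
    ∃ z ∈ S, Metric.closedBall z (h / (4 * (m + 1) ^ 2 * (1 + D / h) ^ m)) ⊆ S := by
  set q := 1 + D / h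
  set r := h / (4 * (m + 1) ^ 2 * q ^ m)
  have hq : 1 ≤ q := le_add_of_nonneg_right (div_nonneg hD₀ hh.le)
  have hr : 0 ≤ r := by positivity
  let p : Fin (m + 1) → E := Fin.cons x₀ x
  have hp : ∀ i, p i ∈ S := Fin.cases hx₀ hx
  set z : E := ((m : ℝ) + 1)⁻¹ • ∑ i, p i
  have hzS : z ∈ S := by
    simpa only [z, Finset.smul_sum] using
      hS.sum_mem (fun _ _ => by positivity) (by simp; field_simp) fun i _ => hp i
  have hsum : ∑ i, (p i - z) = 0 := by
    rw [Finset.sum_sub_distrib, Finset.sum_const, Finset.card_univ, Fintype.card_fin,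
      ← Nat.cast_smul_eq_nsmul ℝ, smul_smul]
    push_cast
    rw [mul_inv_cancel₀ (by positivity), one_smul, sub_self]
  refine ⟨z, hzS, closedBall_subset_of_forall_le_inner hS hSc ⟨x₀, hx₀⟩ fun u hu => ?_⟩
  by_contra! hlt
  have ht : ∀ i, |⟪u, p i - z⟫| ≤ (m + 1) * r := by
    simpa using abs_le_card_mul_of_sum_eq_zero hr (by rw [← inner_sum, hsum, inner_zero_right])
      fun i => (hlt _ (hp i)).le
  have hε : ∀ k, |∑ j, ⟪b j, x k - x₀⟫ * ⟪b j, u⟫| ≤ 2 * (m + 1) * r := by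
    intro k
    have hexpand : ∑ j, ⟪b j, x k - x₀⟫ * ⟪b j, u⟫ = ⟪u, p k.succ - z⟫ - ⟪u, p 0 - z⟫ :=
      calc ∑ j, ⟪b j, x k - x₀⟫ * ⟪b j, u⟫ = ∑ j, ⟪u, b j⟫ * ⟪b j, x k - x₀⟫ :=
            Finset.sum_congr rfl fun j _ => by rw [mul_comm, real_inner_comm]
        _ = ⟪u, p k.succ - z⟫ - ⟪u, p 0 - z⟫ := by
            rw [b.sum_inner_mul_inner, ← inner_sub_right, sub_sub_sub_cancel_right]; rfl
    rw [hexpand]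
    linarith [abs_sub (⟪u, p k.succ - z⟫) (⟪u, p 0 - z⟫), ht k.succ, ht 0]
  have hbound : ∀ k j, |⟪b j, x k - x₀⟫| ≤ D := fun k j =>
    (abs_real_inner_le_norm _ _).trans (by simpa [b.norm_eq_one] using hD k)
  have hc : ∀ j, |⟪b j, u⟫| ≤ 2 * (m + 1) * r / h * q ^ m := fun j =>
    (abs_le_of_abs_sum_mul_le_of_lowerTriangular hh hupper hdiag hbound hε j).trans
      (by gcongr; exact j.is_lt.le)
  have hnorm : ‖u‖ ≤ m * (2 * (m + 1) * r / h * q ^ m) :=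
    calc ‖u‖ = ‖∑ j, ⟪b j, u⟫ • b j‖ := by rw [b.sum_repr']
      _ ≤ ∑ j, |⟪b j, u⟫| := (norm_sum_le _ _).trans_eq (by simp [norm_smul, b.norm_eq_one])
      _ ≤ m * (2 * (m + 1) * r / h * q ^ m) :=
          (Finset.sum_le_sum fun j _ => hc j).trans_eq (by simp)
  have hval : m * (2 * (m + 1) * r / h * q ^ m) = m / (2 * (m + 1)) := by
    simp only [r]; field_simp; ring
  rw [hu, hval, le_div_iff₀ (by positivity)] at hnorm
  linarith

section FiniteDimensional

variable {E : Type*} [NormedAddCommGroup E] [InnerProductSpace ℝ E] [FiniteDimensional ℝ E]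

theorem Submodule.exists_norm_eq_one_mem_orthogonal {W : Submodule ℝ E} (hW : W ≠ ⊤) :
    ∃ v ∈ Wᗮ, ‖v‖ = 1 := by
  obtain ⟨w, hw, hw0⟩ := Submodule.exists_mem_ne_zero_of_ne_bot
    (mt Submodule.orthogonal_eq_bot_iff.1 hW)
  exact ⟨‖w‖⁻¹ • w, Submodule.smul_mem _ _ hw, norm_smul_inv_norm hw0⟩

theorem abs_inner_le_abs_inner_gramSchmidtOrthonormalBasis {ι : Type*} [LinearOrder ι]
    [LocallyFiniteOrderBot ι] [WellFoundedLT ι] [Fintype ι] (hcard : finrank ℝ E = Fintype.card ι)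
    (f : ι → E) {k : ι} {v : E} (hv : ‖v‖ ≤ 1) (hvf : v ∈ (Submodule.span ℝ (f '' Iio k))ᗮ) :
    |⟪v, f k⟫| ≤ |⟪gramSchmidtOrthonormalBasis hcard f k, f k⟫| := by
  set b := gramSchmidtOrthonormalBasis hcard f
  have hexpand : ⟪v, f k⟫ = ⟪v, b k⟫ * ⟪b k, f k⟫ := by
    rw [← b.sum_inner_mul_inner v (f k)]
    refine Finset.sum_eq_single k (fun j _ hjk => ?_) (by simp)
    rcases hjk.lt_or_gt with hj | hj
    · by_cases h0 : gramSchmidtNormed ℝ f j = 0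
      · rw [inner_gramSchmidtOrthonormalBasis_eq_zero hcard h0, mul_zero]
      · have hmem : gramSchmidt ℝ f j ∈ Submodule.span ℝ (f '' Iio k) :=
          Submodule.span_mono (image_mono (Iic_subset_Iio.2 hj)) (gramSchmidt_mem_span ℝ f le_rfl)
        rw [gramSchmidtOrthonormalBasis_apply hcard h0, gramSchmidtNormed,
          Submodule.inner_left_of_mem_orthogonal (Submodule.smul_mem _ _ hmem) hvf, zero_mul]
    · rw [gramSchmidtOrthonormalBasis_inv_triangular hcard f hj, mul_zero]
  rw [hexpand, abs_mul]
  refine mul_le_of_le_one_left (abs_nonneg _) ((abs_real_inner_le_norm _ _).trans ?_)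
  simpa [b.norm_eq_one] using hv

theorem exists_orthonormalBasis_lowerTriangular {P : Set E} {x₀ : E} {h : ℝ}
    (hP : ∀ v : E, ‖v‖ = 1 → ∃ y ∈ P, h ≤ |⟪v, y - x₀⟫|) :
    ∃ (b : OrthonormalBasis (Fin (finrank ℝ E)) ℝ E) (x : Fin (finrank ℝ E) → E),
      (∀ i, x i ∈ P) ∧ (∀ i, h ≤ |⟪b i, x i - x₀⟫|) ∧ ∀ i j, i < j → ⟪b j, x i - x₀⟫ = 0 := by
  have hpick : ∀ W : Submodule ℝ E, W ≠ ⊤ →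
      ∃ y v, y ∈ P ∧ v ∈ Wᗮ ∧ ‖v‖ = 1 ∧ h ≤ |⟪v, y - x₀⟫| := by
    intro W hW
    obtain ⟨v, hvW, hv⟩ := W.exists_norm_eq_one_mem_orthogonal hW
    obtain ⟨y, hyP, hy⟩ := hP v hv
    exact ⟨y, v, hyP, hvW, hv, hy⟩
  choose! y v hyP hvW hv hvy using hpick
  let x : Fin (finrank ℝ E) → E := WellFoundedLT.fix fun k x' =>
    y (Submodule.span ℝ (range fun j : Iio k => x' j j.2 - x₀))
  set f := fun i => x i - x₀
  have hx : ∀ k, x k = y (Submodule.span ℝ (f '' Iio k)) := fun k => by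
    rw [image_eq_range]
    exact WellFoundedLT.fix_eq _ k
  have hW : ∀ k, Submodule.span ℝ (f '' Iio k) ≠ ⊤ := by
    intro k htop
    have := finrank_range_le_card (R := ℝ) fun j : Iio k => f j
    rw [← image_eq_range, Set.finrank, htop, finrank_top] at this
    rw [← Set.toFinset_card, Set.toFinset_Iio, Fin.card_Iio] at this
    exact k.is_lt.not_ge this
  refine ⟨gramSchmidtOrthonormalBasis (Fintype.card_fin _).symm f, x, fun i => ?_, fun i => ?_,
    fun i j hij => gramSchmidtOrthonormalBasis_inv_triangular _ f hij⟩
  · rw [hx]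
    exact hyP _ (hW i)
  · refine (hvy _ (hW i)).trans ?_
    rw [← hx]
    exact abs_inner_le_abs_inner_gramSchmidtOrthonormalBasis _ f (hv _ (hW i)).le (hvW _ (hW i))

variable [MeasurableSpace E] [BorelSpace E]

theorem OrthonormalBasis.volume_setOf_abs_inner_sub_le {ι : Type*} [Fintype ι]
    (b : OrthonormalBasis ι ℝ E) (x₀ : E) (B : ι → ℝ) :
    volume {y : E | ∀ i, |⟪b i, y - x₀⟫| ≤ B i} = ∏ i, ENNReal.ofReal (2 * B i) := by
  let g : E ≃ᵐ (ι → ℝ) := b.measurableEquiv.trans (MeasurableEquiv.toLp 2 (ι → ℝ)).symm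
  have hg : MeasurePreserving g := (b.measurePreserving_measurableEquiv).trans
    (EuclideanSpace.volume_preserving_symm_measurableEquiv_toLp ι)
  have hset : {y : E | ∀ i, |⟪b i, y - x₀⟫| ≤ B i}
      = (fun y => y + -x₀) ⁻¹' (g ⁻¹' univ.pi fun i => Icc (-B i) (B i)) := by
    ext y
    have hgi : ∀ i, g (y + -x₀) i = ⟪b i, y + -x₀⟫ := fun i => b.repr_apply_apply _ i
    simp only [mem_ofPred_eq, mem_preimage, mem_univ_pi, mem_Icc, abs_le, sub_eq_add_neg, hgi]
  rw [hset, measure_preimage_add_right, hg.measure_preimage_equiv, volume_pi_pi]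
  congr 1 with i
  rw [Real.volume_Icc]
  ring_nf

theorem volume_setOf_norm_sub_le_abs_inner_sub_le {v : E} (hv : ‖v‖ = 1) (x₀ : E) (D h : ℝ) :
    volume {y : E | ‖y - x₀‖ ≤ D ∧ |⟪v, y - x₀⟫| ≤ h}
      ≤ ENNReal.ofReal (2 * h) * ENNReal.ofReal (2 * D) ^ (finrank ℝ E - 1) := by
  classical
  have hpos : 0 < finrank ℝ E :=
    finrank_pos_iff_exists_ne_zero.2 ⟨v, norm_ne_zero_iff.1 (by simp [hv])⟩
  set i₀ : Fin (finrank ℝ E) := ⟨0, hpos⟩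
  have hv' : Orthonormal ℝ (({i₀} : Set (Fin (finrank ℝ E))).domRestrict fun _ => v) := by
    refine ⟨fun _ => hv, fun i j hij => absurd (Subsingleton.elim i j) hij⟩
  obtain ⟨b, hb⟩ := hv'.exists_orthonormalBasis_extension_of_card_eq (Fintype.card_fin _).symm
  calc volume {y : E | ‖y - x₀‖ ≤ D ∧ |⟪v, y - x₀⟫| ≤ h}
      ≤ volume {y : E | ∀ i, |⟪b i, y - x₀⟫| ≤ Function.update (fun _ => D) i₀ h i} := by
        refine measure_mono fun y ⟨hD, hh⟩ i => ?_
        rcases eq_or_ne i i₀ with rfl | hi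
        · simpa [hb i₀ rfl] using hh
        · rw [Function.update_of_ne hi]
          exact (abs_real_inner_le_norm _ _).trans (by simpa [b.norm_eq_one] using hD)
    _ = ENNReal.ofReal (2 * h) * ENNReal.ofReal (2 * D) ^ (finrank ℝ E - 1) := by
        rw [b.volume_setOf_abs_inner_sub_le, Fintype.prod_eq_mul_prod_compl i₀,
          Function.update_self, Finset.prod_congr rfl fun i hi =>
            by rw [Function.update_of_ne (Finset.mem_compl.1 hi ∘ Finset.mem_singleton.2)],
          Finset.prod_const, Finset.card_compl, Finset.card_singleton, Fintype.card_fin]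

theorem exists_le_abs_inner_sub_of_volume_lt {P : Set E} {x₀ : E} {D h : ℝ}
    (hD : ∀ y ∈ P, ‖y - x₀‖ ≤ D)
    (hvol : ENNReal.ofReal (2 * h) * ENNReal.ofReal (2 * D) ^ (finrank ℝ E - 1) < volume P)
    (v : E) (hv : ‖v‖ = 1) : ∃ y ∈ P, h ≤ |⟪v, y - x₀⟫| := by
  by_contra! hthin
  have hsub : P ⊆ {y | ‖y - x₀‖ ≤ D ∧ |⟪v, y - x₀⟫| ≤ h} := fun y hy => ⟨hD y hy, (hthin y hy).le⟩
  exact (measure_mono hsub).not_gt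
    (hvol.trans_le' (volume_setOf_norm_sub_le_abs_inner_sub_le hv x₀ D h))

theorem exists_closedBall_subset_of_volume_lt {P : Set E} (hP : Convex ℝ P) (hPc : IsClosed P)
    {x₀ : E} (hx₀ : x₀ ∈ P) {D h : ℝ} (hh : 0 < h) (hD : ∀ y ∈ P, ‖y - x₀‖ ≤ D)
    (hvol : ENNReal.ofReal (2 * h) * ENNReal.ofReal (2 * D) ^ (finrank ℝ E - 1) < volume P) :
    ∃ z ∈ P, Metric.closedBall z
      (h / (4 * (finrank ℝ E + 1) ^ 2 * (1 + D / h) ^ finrank ℝ E)) ⊆ P := by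
  obtain ⟨b, x, hxP, hdiag, hupper⟩ :=
    exists_orthonormalBasis_lowerTriangular (exists_le_abs_inner_sub_of_volume_lt hD hvol)
  exact exists_closedBall_subset_of_lowerTriangular hP hPc b hx₀ hxP hh
    (by simpa using hD x₀ hx₀) (fun i => hD _ (hxP i)) hdiag hupper

end FiniteDimensional

theorem stmt4_general (n : ℕ) (K : Set (EuclideanSpace ℝ (Fin n)))
    (hKcp : IsCompact K)
    (ν : ℝ) (hν : 0 < ν) :
    ∃ r : ℝ, 0 < r ∧ ∀ P : Set (EuclideanSpace ℝ (Fin n)),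
      P ⊆ K → P.Nonempty → IsCompact P → Convex ℝ P → ν ≤ (volume P).toReal →
      ∃ p ∈ P, Metric.closedBall p r ⊆ P := by
  set D := Metric.diam K
  have hD : 0 ≤ D := Metric.diam_nonneg
  set h := ν / (4 * (2 * D + 1) ^ (n - 1))
  have hh : 0 < h := by positivity
  refine ⟨h / (4 * (n + 1) ^ 2 * (1 + D / h) ^ n), by positivity, ?_⟩
  rintro P hPK ⟨x₀, hx₀⟩ hPc hPcv hPν
  have hslab : 2 * h * (2 * D) ^ (n - 1) < ν :=
    calc 2 * h * (2 * D) ^ (n - 1) ≤ 2 * h * (2 * D + 1) ^ (n - 1) := by gcongr; linarith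
      _ < ν := by simp only [h]; field_simp; linarith
  have hvol : ENNReal.ofReal (2 * h) * ENNReal.ofReal (2 * D) ^ (n - 1) < volume P := by
    rw [← ENNReal.ofReal_pow (by positivity), ← ENNReal.ofReal_mul (by positivity)]
    exact (ENNReal.ofReal_lt_ofReal_iff hν).2 hslab |>.trans_le (ENNReal.ofReal_le_of_le_toReal hPν)
  simpa using exists_closedBall_subset_of_volume_lt hPcv hPc.isClosed hx₀ hh
    (fun y hy => (dist_eq_norm y x₀).symm.trans_le
      (Metric.dist_le_diam_of_mem hKcp.isBounded (hPK hy) (hPK hx₀)))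
    (by rwa [finrank_euclideanSpace_fin])

theorem stmt4 (n : ℕ) (hn : 1 ≤ n) (K : Set (EuclideanSpace ℝ (Fin n)))
    (hKne : K.Nonempty) (hKcp : IsCompact K) (hKcv : Convex ℝ K)
    (ν : ℝ) (hν : 0 < ν) (hνK : ν ≤ (volume K).toReal) :
    ∃ r : ℝ, 0 < r ∧ ∀ P : Set (EuclideanSpace ℝ (Fin n)),
      P ⊆ K → P.Nonempty → IsCompact P → Convex ℝ P → ν ≤ (volume P).toReal →
      ∃ p ∈ P, Metric.closedBall p r ⊆ P :=
  stmt4_general n K hKcp ν hν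
end

section
/- Let n ≥ 1 and let a < b be real numbers. Let A ⊆ {x ∈ ℝⁿ : x₁ = a} be a nonempty compact convex set and let V ∈ ℝⁿ with first coordinate V₁ = b. Set C := conv(A ∪ {V}) and, for t ∈ [a, b), set C(t) := C ∩ {x ∈ ℝⁿ : x₁ ≥ t}. Then ((b − a)/(b − t))·C(t) = C + ((t − a)/(b − t))·V; in particular, ((b − a)/(b − t))·C(t) is a translate of C. -/
/-!
Since `C = conv(A ∪ {V})` is the union of the segments `[V, k]` with `k ∈ conv A` lying in the
hyperplane `x₁ = a`, and the first coordinate is affine along each such segment, cutting at the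
level `x₁ = t` is the homothety about `V` of ratio `r = (b - t)/(b - a)`. Scaling by `r⁻¹` turns
that homothety into the translation by `(r⁻¹ - 1) • V = ((t - a)/(b - t)) • V`.
-/

open Set Pointwise

variable {E : Type*} [AddCommGroup E] [Module ℝ E]

theorem segment_inter_halfSpace_eq_image_homothety (f : E →ₗ[ℝ] ℝ) {v k : E} {a b t : ℝ}
    (hv : f v = b) (hk : f k = a) (hab : a < b) (ht : a ≤ t) (htb : t ≤ b) :
    segment ℝ v k ∩ {x | t ≤ f x} =
      AffineMap.homothety v ((b - t) / (b - a)) '' segment ℝ v k := by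
  set r := (b - t) / (b - a)
  have hparam : Icc 0 1 ∩ AffineMap.lineMap v k ⁻¹' {x | t ≤ f x} = Icc 0 r := by
    ext μ
    simp only [mem_inter_iff, mem_preimage, mem_ofPred_eq, mem_Icc, AffineMap.lineMap_apply_module,
      map_add, map_smul, hv, hk, smul_eq_mul, r, le_div_iff₀ (sub_pos.2 hab)]
    constructor
    · rintro ⟨⟨hμ0, -⟩, hμ⟩
      exact ⟨hμ0, by linarith⟩
    · rintro ⟨hμ0, hμ⟩
      exact ⟨⟨hμ0, by nlinarith⟩, by linarith⟩
  have hr : 0 ≤ r := div_nonneg (by linarith) (by linarith)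
  rw [segment_eq_image_lineMap, ← image_inter_preimage, hparam, image_image]
  simp only [AffineMap.homothety_eq_lineMap, AffineMap.lineMap_lineMap_right]
  rw [← image_image _ (r * ·), image_mul_left_Icc hr zero_le_one, mul_zero, mul_one]

theorem convexJoin_inter_halfSpace_eq_image_homothety (f : E →ₗ[ℝ] ℝ) {v : E} {K : Set E}
    {a b t : ℝ} (hv : f v = b) (hK : ∀ k ∈ K, f k = a) (hab : a < b) (ht : a ≤ t) (htb : t ≤ b) :
    convexJoin ℝ {v} K ∩ {x | t ≤ f x} =
      AffineMap.homothety v ((b - t) / (b - a)) '' convexJoin ℝ {v} K := by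
  simp only [convexJoin_singleton_left, iUnion₂_inter, image_iUnion₂]
  exact iUnion₂_congr fun k hk =>
    segment_inter_halfSpace_eq_image_homothety f hv (hK k hk) hab ht htb

theorem inv_smul_image_homothety {r : ℝ} (hr : r ≠ 0) (v : E) (S : Set E) :
    r⁻¹ • (AffineMap.homothety v r '' S) = (· + (r⁻¹ - 1) • v) '' S := by
  rw [← image_smul, image_image]
  refine image_congr fun x _ => ?_
  rw [AffineMap.homothety_apply, vsub_eq_sub, vadd_eq_add, smul_add, inv_smul_smul₀ hr]
  module

theorem stmt7_general (n : ℕ) (hn : 0 < n) (a b : ℝ) (hab : a < b)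
    (A : Set (EuclideanSpace ℝ (Fin n))) (hAne : A.Nonempty)
    (hA1 : ∀ x ∈ A, x ⟨0, hn⟩ = a)
    (V : EuclideanSpace ℝ (Fin n)) (hV : V ⟨0, hn⟩ = b)
    (t : ℝ) (ht : a ≤ t) (htb : t < b) :
    ((b - a) / (b - t)) •
        (convexHull ℝ (A ∪ {V}) ∩ {x : EuclideanSpace ℝ (Fin n) | t ≤ x ⟨0, hn⟩})
      = (fun x => x + ((t - a) / (b - t)) • V) '' convexHull ℝ (A ∪ {V}) := by
  let f : EuclideanSpace ℝ (Fin n) →ₗ[ℝ] ℝ :=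
    (EuclideanSpace.proj (⟨0, hn⟩ : Fin n) : EuclideanSpace ℝ (Fin n) →L[ℝ] ℝ)
  have hhull : ∀ k ∈ convexHull ℝ A, f k = a := fun k hk =>
    convexHull_min hA1 ((convex_singleton a).linear_preimage f) hk
  have hcut := convexJoin_inter_halfSpace_eq_image_homothety f hV hhull hab ht htb.le
  rw [union_singleton, convexHull_insert hAne]
  change _ • (convexJoin ℝ {V} (convexHull ℝ A) ∩ {x | t ≤ f x}) = _
  have hr : (b - t) / (b - a) ≠ 0 := (div_pos (sub_pos.2 htb) (sub_pos.2 hab)).ne'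
  have hbt : b - t ≠ 0 := (sub_pos.2 htb).ne'
  have hshift : ((b - t) / (b - a))⁻¹ - 1 = (t - a) / (b - t) := by
    field_simp
    ring
  rw [hcut, ← inv_div, inv_smul_image_homothety hr, hshift]

theorem stmt7 (n : ℕ) (hn : 0 < n) (a b : ℝ) (hab : a < b)
    (A : Set (EuclideanSpace ℝ (Fin n))) (hAne : A.Nonempty) (hAcp : IsCompact A)
    (hAcv : Convex ℝ A) (hA1 : ∀ x ∈ A, x ⟨0, hn⟩ = a)
    (V : EuclideanSpace ℝ (Fin n)) (hV : V ⟨0, hn⟩ = b)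
    (t : ℝ) (ht : a ≤ t) (htb : t < b) :
    ((b - a) / (b - t)) •
        (convexHull ℝ (A ∪ {V}) ∩ {x : EuclideanSpace ℝ (Fin n) | t ≤ x ⟨0, hn⟩})
      = (fun x => x + ((t - a) / (b - t)) • V) '' convexHull ℝ (A ∪ {V}) :=
  stmt7_general n hn a b hab A hAne hA1 V hV t ht htb
end

section
/- Let 𝕜 be a field and V a finite-dimensional 𝕜-vector space of dimension d ≥ 1. Let v : V → ℝ ∪ {+∞} satisfy: v(0) = +∞; 0 ≤ v(x) < +∞ for all x ≠ 0; v(x + y) ≥ min(v(x), v(y)) for all x, y; and v(cx) = v(x) for all x ∈ V and c ∈ 𝕜 \ {0}. For λ ≥ 0 let F^λ := {x ∈ V : v(x) ≥ λ} (a linear subspace), and for ℓ ∈ {1, …, d} let j_ℓ := sup{λ ≥ 0 : dim F^λ ≥ ℓ}. Then each j_ℓ is finite and the supremum defining it is attained; for every m ∈ {1, …, d}, the supremum over all linearly independent families (s₁, …, s_m) in V of Σ_{i=1}^m v(s_i) equals Σ_{ℓ=1}^m j_ℓ and is attained; moreover, for any linearly independent family attaining this supremum, the multiset {v(s₁), …,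 v(s_m)} equals the multiset {j₁, …, j_m}. -/
open Set

def sublevel {V : Type*} (v : V → WithTop ℝ) (lam : ℝ) : Set V :=
  {x | (lam : WithTop ℝ) ≤ v x}

section Aux

variable {𝕜 : Type*} [Field 𝕜] {V : Type*} [AddCommGroup V] [Module 𝕜 V]

def Fsub (v : V → WithTop ℝ) (hv0 : v 0 = ⊤)
    (hvadd : ∀ x y : V, min (v x) (v y) ≤ v (x + y))
    (hvsmul : ∀ (c : 𝕜) (x : V), c ≠ 0 → v (c • x) = v x) (lam : ℝ) :
    Submodule 𝕜 V where
  carrier := sublevel v lam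
  zero_mem' := by simp only [sublevel, Set.mem_setOf_eq, hv0]; exact le_top
  add_mem' := fun {a b} ha hb => le_trans (le_min ha hb) (hvadd a b)
  smul_mem' := by
    intro c x hx
    by_cases hc : c = 0
    · simp only [hc, zero_smul, sublevel, Set.mem_setOf_eq, hv0]; exact le_top
    · simpa only [sublevel, Set.mem_setOf_eq, hvsmul c x hc] using hx

lemma span_sublevel (v : V → WithTop ℝ) (hv0 : v 0 = ⊤)
    (hvadd : ∀ x y : V, min (v x) (v y) ≤ v (x + y))
    (hvsmul : ∀ (c : 𝕜) (x : V), c ≠ 0 → v (c • x) = v x) (lam : ℝ) :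
    Submodule.span 𝕜 (sublevel v lam) = Fsub v hv0 hvadd hvsmul lam :=
  Submodule.span_eq (Fsub v hv0 hvadd hvsmul lam)

lemma flag_exists [FiniteDimensional 𝕜 V] :
    ∀ (m : ℕ) (W : Fin m → Submodule 𝕜 V),
      (∀ ℓ : Fin m, (ℓ : ℕ) + 1 ≤ Module.finrank 𝕜 (W ℓ)) →
      ∃ e : Fin m → V, LinearIndependent 𝕜 e ∧ ∀ ℓ, e ℓ ∈ W ℓ := by
  intro m
  induction m with
  | zero => exact fun W _ => ⟨fun i => 0, linearIndependent_empty_type, fun ℓ => ℓ.elim0⟩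
  | succ n ih =>
    intro W hW
    obtain ⟨e, he, hmem⟩ := ih (fun i => W i.castSucc) (fun i => by
      simpa using hW i.castSucc)
    have hrank : Module.finrank 𝕜 (Submodule.span 𝕜 (Set.range e)) ≤ n := by
      rw [finrank_span_eq_card he]; simp
    have hnle : ¬ (W (Fin.last n) ≤ Submodule.span 𝕜 (Set.range e)) := by
      intro hle
      have h1 := Submodule.finrank_mono hle
      have h2 := hW (Fin.last n)
      simp only [Fin.val_last] at h2
      omega
    obtain ⟨x, hxW, hxs⟩ := SetLike.not_le_iff_exists.mp hnle
    refine ⟨Fin.snoc e x, linearIndependent_fin_snoc.mpr ⟨he, hxs⟩, ?_⟩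
    intro ℓ
    refine Fin.lastCases ?_ ?_ ℓ
    · simpa using hxW
    · intro i; simpa using hmem i

end Aux
theorem stmt13 (𝕜 : Type*) [Field 𝕜] (V : Type*) [AddCommGroup V] [Module 𝕜 V]
    [FiniteDimensional 𝕜 V]
    (d : ℕ) (hd : d = Module.finrank 𝕜 V) (hd1 : 1 ≤ d)
    (v : V → WithTop ℝ)
    (hv0 : v 0 = ⊤)
    (hvfin : ∀ x : V, x ≠ 0 → v x ≠ ⊤)
    (hvnn : ∀ x : V, x ≠ 0 → 0 ≤ v x)
    (hvadd : ∀ x y : V, min (v x) (v y) ≤ v (x + y))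
    (hvsmul : ∀ (c : 𝕜) (x : V), c ≠ 0 → v (c • x) = v x)
    (jset : ℕ → Set ℝ)
    (hjset : ∀ ℓ, jset ℓ = {lam : ℝ | 0 ≤ lam ∧
        ℓ ≤ Module.finrank 𝕜 (Submodule.span 𝕜 (sublevel v lam))})
    (j : ℕ → ℝ) (hj : ∀ ℓ, j ℓ = sSup (jset ℓ)) :
    (∀ ℓ, 1 ≤ ℓ → ℓ ≤ d → BddAbove (jset ℓ) ∧ j ℓ ∈ jset ℓ) ∧
    (∀ m, 1 ≤ m → m ≤ d →
      IsGreatest {t : WithTop ℝ |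
          ∃ s : Fin m → V, LinearIndependent 𝕜 s ∧ t = ∑ i, v (s i)}
        (((∑ ℓ ∈ Finset.range m, j (ℓ + 1) : ℝ) : WithTop ℝ)) ∧
      ∀ s : Fin m → V, LinearIndependent 𝕜 s →
        (∑ i, v (s i)) = (((∑ ℓ ∈ Finset.range m, j (ℓ + 1) : ℝ) : WithTop ℝ)) →
        Multiset.map (fun i => v (s i)) (Finset.univ : Finset (Fin m)).val
          = Multiset.map (fun ℓ => ((j (ℓ + 1) : ℝ) : WithTop ℝ)) (Finset.range m).val) := by
  classical
  set F : ℝ → Submodule 𝕜 V := Fsub v hv0 hvadd hvsmul with hF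
  have hspan : ∀ lam, Submodule.span 𝕜 (sublevel v lam) = F lam :=
    fun lam => span_sublevel v hv0 hvadd hvsmul lam
  have hmemF : ∀ (lam : ℝ) (x : V), x ∈ F lam ↔ (lam : WithTop ℝ) ≤ v x := fun _ _ => Iff.rfl
  have hjset' : ∀ (ℓ : ℕ) (lam : ℝ),
      lam ∈ jset ℓ ↔ 0 ≤ lam ∧ ℓ ≤ Module.finrank 𝕜 (F lam) := by
    intro ℓ lam
    rw [hjset ℓ]
    simp only [Set.mem_setOf_eq]
    rw [hspan lam]
  have hFmono : ∀ {a b : ℝ}, a ≤ b → F b ≤ F a := by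
    intro a b hab x hx
    exact le_trans (WithTop.coe_le_coe.mpr hab) hx
  set T : Set ℝ := {t : ℝ | ∃ x : V, x ≠ 0 ∧ v x = (t : WithTop ℝ)} with hT
  have hvT : ∀ x : V, x ≠ 0 → ∃ t : ℝ, v x = (t : WithTop ℝ) ∧ t ∈ T := by
    intro x hx
    obtain ⟨t, ht⟩ := WithTop.ne_top_iff_exists.mp (hvfin x hx)
    exact ⟨t, ht.symm, ⟨x, hx, ht.symm⟩⟩
  have hTfin : T.Finite := by
    have hkey : ∀ t₁ ∈ T, ∀ t₂, t₁ < t₂ →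
        Module.finrank 𝕜 (F t₂) < Module.finrank 𝕜 (F t₁) := by
      intro t₁ ht₁ t₂ hlt
      obtain ⟨x, hx0, hx⟩ := ht₁
      apply Submodule.finrank_lt_finrank_of_lt
      refine lt_of_le_of_ne (hFmono hlt.le) ?_
      intro heq
      have hx1 : x ∈ F t₁ := (hmemF t₁ x).mpr (le_of_eq hx.symm)
      rw [← heq] at hx1
      have h2 : (t₂ : WithTop ℝ) ≤ (t₁ : WithTop ℝ) := le_trans ((hmemF t₂ x).mp hx1) (le_of_eq hx)
      exact absurd (WithTop.coe_le_coe.mp h2) (not_le.mpr hlt)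
    have hinj : Set.InjOn (fun t => Module.finrank 𝕜 (F t)) T := by
      intro a ha b hb hab
      rcases lt_trichotomy a b with h | h | h
      · exact absurd hab (hkey a ha b h).ne'
      · exact h
      · exact absurd hab (hkey b hb a h).ne
    have himg : ((fun t => Module.finrank 𝕜 (F t)) '' T).Finite := by
      apply Set.Finite.subset (Set.finite_Iic d)
      rintro _ ⟨t, _, rfl⟩
      simp only [Set.mem_Iic]
      rw [hd]; exact Submodule.finrank_le _
    exact Set.Finite.of_finite_image himg hinj
  have hwitT : ∀ ℓ : ℕ, 1 ≤ ℓ → ∀ lam ∈ jset ℓ, ∃ t ∈ T, lam ≤ t := by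
    intro ℓ hℓ lam hlam
    obtain ⟨hlam0, hrank⟩ := (hjset' ℓ lam).mp hlam
    have hpos : 0 < Module.finrank 𝕜 (F lam) := lt_of_lt_of_le hℓ hrank
    have hnt : Nontrivial (F lam) := Module.finrank_pos_iff.mp hpos
    obtain ⟨y, hy⟩ := exists_ne (0 : F lam)
    have hy0 : (y : V) ≠ 0 := fun h => hy (Subtype.ext h)
    obtain ⟨t, hvt, htT⟩ := hvT y hy0
    refine ⟨t, htT, ?_⟩
    have h2 : (lam : WithTop ℝ) ≤ v (y : V) := (hmemF lam y).mp y.2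
    rw [hvt] at h2
    exact_mod_cast h2
  have hbdd : ∀ ℓ : ℕ, 1 ≤ ℓ → BddAbove (jset ℓ) := by
    intro ℓ hℓ
    obtain ⟨M, hM⟩ := hTfin.bddAbove
    refine ⟨M, fun lam hlam => ?_⟩
    obtain ⟨t, htT, hlt⟩ := hwitT ℓ hℓ lam hlam
    exact le_trans hlt (hM htT)
  have hzero_mem : ∀ ℓ : ℕ, ℓ ≤ d → (0 : ℝ) ∈ jset ℓ := by
    intro ℓ hℓd
    rw [hjset']
    refine ⟨le_refl _, ?_⟩
    have hFtop : F 0 = ⊤ := by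
      rw [eq_top_iff]
      intro x _
      rw [hmemF]
      by_cases hx : x = 0
      · rw [hx, hv0]; exact le_top
      · simpa using hvnn x hx
    rw [hFtop, finrank_top, ← hd]; exact hℓd
  have hjmem : ∀ ℓ : ℕ, 1 ≤ ℓ → ℓ ≤ d → j ℓ ∈ jset ℓ := by
    intro ℓ hℓ1 hℓd
    have hne : (jset ℓ).Nonempty := ⟨0, hzero_mem ℓ hℓd⟩
    have hb := hbdd ℓ hℓ1
    rw [hj ℓ]
    by_contra hcon
    set a := sSup (jset ℓ) with ha
    have ha0 : 0 ≤ a := le_csSup hb (hzero_mem ℓ hℓd)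
    have hrka : Module.finrank 𝕜 (F a) < ℓ := by
      by_contra h
      exact hcon ((hjset' ℓ a).mpr ⟨ha0, not_lt.mp h⟩)
    set T' : Set ℝ := {t | t ∈ T ∧ t < a} with hT'
    have hT'fin : T'.Finite := hTfin.subset (fun t ht => ht.1)
    have hwit : ∀ lam ∈ jset ℓ, ∃ t ∈ T', lam ≤ t := by
      intro lam hlam
      obtain ⟨hlam0, hrank⟩ := (hjset' ℓ lam).mp hlam
      have hnle : ¬ (F lam ≤ F a) := by
        intro hle
        have := Submodule.finrank_mono hle
        omega
      obtain ⟨x, hxmem, hxnot⟩ := SetLike.not_le_iff_exists.mp hnle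
      have hx0 : x ≠ 0 := by rintro rfl; exact hxnot (Submodule.zero_mem _)
      obtain ⟨t, hvt, htT⟩ := hvT x hx0
      have h1 : lam ≤ t := by
        have h2 : (lam : WithTop ℝ) ≤ v x := (hmemF lam x).mp hxmem
        rw [hvt] at h2
        exact_mod_cast h2
      have h2 : t < a := by
        by_contra h
        exact hxnot ((hmemF a x).mpr (le_of_le_of_eq (WithTop.coe_le_coe.mpr (not_lt.mp h)) hvt.symm))
      exact ⟨t, ⟨htT, h2⟩, h1⟩
    have hT'ne : T'.Nonempty := by
      obtain ⟨t, ht, _⟩ := hwit 0 (hzero_mem ℓ hℓd); exact ⟨t, ht⟩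
    have hstar := hT'ne.csSup_mem hT'fin
    have hub : a ≤ sSup T' := csSup_le hne (fun lam hlam => by
      obtain ⟨t, htT', hlt⟩ := hwit lam hlam
      exact le_trans hlt (le_csSup hT'fin.bddAbove htT'))
    exact absurd (lt_of_le_of_lt hub hstar.2) (lt_irrefl a)
  have key : ∀ (m : ℕ) (s : Fin m → V), LinearIndependent 𝕜 s →
      ∃ (σ : Equiv.Perm (Fin m)) (g : Fin m → ℝ),
        (∀ i, v (s (σ i)) = (g i : WithTop ℝ)) ∧
        (∀ ℓ : Fin m, g ℓ ≤ j ((ℓ : ℕ) + 1)) := by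
    intro m s hs
    have hs0 : ∀ i, s i ≠ 0 := fun i => hs.ne_zero i
    choose r hr using fun i => hvT (s i) (hs0 i)
    set σ := Tuple.sort (fun i => -(r i)) with hσ
    have hanti : Antitone (r ∘ σ) := by
      have hmon := Tuple.monotone_sort (fun i => -(r i))
      intro a b hab
      have h2 := hmon hab
      simpa using h2
    refine ⟨σ, r ∘ σ, fun i => (hr (σ i)).1, ?_⟩
    intro ℓ
    have hcast : ((ℓ : ℕ) + 1) ≤ m := ℓ.2
    set t : Fin ((ℓ : ℕ) + 1) → V := fun i => s (σ (Fin.castLE hcast i)) with htdef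
    have hinj : Function.Injective (fun i : Fin ((ℓ : ℕ) + 1) => σ (Fin.castLE hcast i)) := by
      intro a b hab
      exact Fin.castLE_injective hcast (σ.injective hab)
    have hti : LinearIndependent 𝕜 t := hs.comp _ hinj
    have hmem' : ∀ i, t i ∈ F (r (σ ℓ)) := by
      intro i
      rw [hmemF, (hr (σ (Fin.castLE hcast i))).1]
      refine WithTop.coe_le_coe.mpr (hanti (show Fin.castLE hcast i ≤ ℓ from ?_))
      simpa [Fin.le_def] using Nat.lt_succ_iff.mp i.2
    have hrank : (ℓ : ℕ) + 1 ≤ Module.finrank 𝕜 (F (r (σ ℓ))) := by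
      have h1 : Submodule.span 𝕜 (Set.range t) ≤ F (r (σ ℓ)) :=
        Submodule.span_le.mpr (Set.range_subset_iff.mpr hmem')
      have h2 := Submodule.finrank_mono h1
      rw [finrank_span_eq_card hti] at h2
      simpa using h2
    have hg0 : 0 ≤ r (σ ℓ) := by
      have h2 := hvnn _ (hs0 (σ ℓ))
      rw [(hr (σ ℓ)).1] at h2
      exact_mod_cast h2
    have hmemj : r (σ ℓ) ∈ jset ((ℓ : ℕ) + 1) := (hjset' _ _).mpr ⟨hg0, hrank⟩
    rw [hj]
    exact le_csSup (hbdd _ (Nat.le_add_left 1 _)) hmemj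
  have hsum_eq : ∀ (m : ℕ) (s : Fin m → V) (σ : Equiv.Perm (Fin m)) (g : Fin m → ℝ),
      (∀ i, v (s (σ i)) = (g i : WithTop ℝ)) →
      ∑ i, v (s i) = ((∑ i, g i : ℝ) : WithTop ℝ) := by
    intro m s σ g hg
    rw [← Equiv.sum_comp σ (fun i => v (s i)), WithTop.coe_sum]
    exact Finset.sum_congr rfl (fun i _ => hg i)
  have hjsum : ∀ m : ℕ, (∑ ℓ ∈ Finset.range m, j (ℓ + 1)) = ∑ i : Fin m, j ((i : ℕ) + 1) :=
    fun m => (Fin.sum_univ_eq_sum_range _ m).symm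
  refine ⟨fun ℓ h1 h2 => ⟨hbdd ℓ h1, hjmem ℓ h1 h2⟩, ?_⟩
  intro m hm1 hmd
  have hub : ∀ s : Fin m → V, LinearIndependent 𝕜 s →
      ∑ i, v (s i) ≤ ((∑ ℓ ∈ Finset.range m, j (ℓ + 1) : ℝ) : WithTop ℝ) := by
    intro s hs
    obtain ⟨σ, g, hg, hgle⟩ := key m s hs
    rw [hsum_eq m s σ g hg, hjsum m]
    exact_mod_cast Finset.sum_le_sum (fun i _ => hgle i)
  obtain ⟨e, he, hemem⟩ := flag_exists m (fun ℓ : Fin m => F (j ((ℓ : ℕ) + 1))) (fun ℓ => by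
    have hld : (ℓ : ℕ) + 1 ≤ d := by have := ℓ.2; omega
    have h := hjmem ((ℓ : ℕ) + 1) (Nat.le_add_left 1 _) hld
    exact ((hjset' _ _).mp h).2)
  have hlb : ((∑ ℓ ∈ Finset.range m, j (ℓ + 1) : ℝ) : WithTop ℝ) ≤ ∑ i, v (e i) := by
    rw [hjsum m, WithTop.coe_sum]
    exact Finset.sum_le_sum (fun i _ => (hmemF _ _).mp (hemem i))
  have heq : ∑ i, v (e i) = ((∑ ℓ ∈ Finset.range m, j (ℓ + 1) : ℝ) : WithTop ℝ) :=
    le_antisymm (hub e he) hlb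
  refine ⟨⟨⟨e, he, heq.symm⟩, ?_⟩, ?_⟩
  · rintro x ⟨s, hs, rfl⟩; exact hub s hs
  · intro s hs hsum
    obtain ⟨σ, g, hg, hgle⟩ := key m s hs
    have h1 : ((∑ i, g i : ℝ) : WithTop ℝ) = ((∑ i : Fin m, j ((i : ℕ) + 1) : ℝ) : WithTop ℝ) := by
      rw [← hsum_eq m s σ g hg, hsum, hjsum m]
    have hsum' : (∑ i, g i) = ∑ i : Fin m, j ((i : ℕ) + 1) := WithTop.coe_injective h1
    have hterm : ∀ i ∈ (Finset.univ : Finset (Fin m)), g i = j ((i : ℕ) + 1) :=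
      (Finset.sum_eq_sum_iff_of_le (fun i _ => hgle i)).mp hsum'
    have hperm : Multiset.map (⇑σ) (Finset.univ : Finset (Fin m)).val
        = (Finset.univ : Finset (Fin m)).val := by
      have h2 := congrArg Finset.val (Finset.map_univ_equiv σ)
      simpa [Finset.map_val] using h2
    calc Multiset.map (fun i => v (s i)) (Finset.univ : Finset (Fin m)).val
        = Multiset.map (fun i => v (s i)) (Multiset.map (⇑σ) (Finset.univ : Finset (Fin m)).val) := by
          rw [hperm]
      _ = Multiset.map (fun i : Fin m => ((j ((i : ℕ) + 1) : ℝ) : WithTop ℝ))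
            (Finset.univ : Finset (Fin m)).val := by
          rw [Multiset.map_map]
          refine Multiset.map_congr rfl ?_
          intro i _
          simp only [Function.comp_apply]
          rw [hg i, hterm i (Finset.mem_univ i)]
      _ = Multiset.map (fun ℓ : ℕ => ((j (ℓ + 1) : ℝ) : WithTop ℝ)) (Finset.range m).val := by
          have h2 : (Finset.range m).val
              = Multiset.map Fin.val (Finset.univ : Finset (Fin m)).val := by
            rw [← Nat.Iio_eq_range, ← Fin.map_valEmbedding_univ]
            rfl
          rw [h2, Multiset.map_map]
          rfl
end

section
/- Let R = ⊕_{K ≥ 0} R_K be a commutative ℕ-graded ℂ-algebra which is an integral domain, with each graded piece R_K finite-dimensional over ℂ. Let v : R → ℝ ∪ {+∞} satisfy: v(0) = +∞; 0 ≤ v(x) < +∞ for all x ≠ 0; v(xy) = v(x) + v(y) for all x, y; and v(x + y) ≥ min(v(x), v(y)) for all x, y. For K with d_K := dim_ℂ R_K > 0, ℓ ∈ {1, …, d_K}, define the jumping numbers j_{K,ℓ} := max{λ ≥ 0 : dim {s ∈ R_K : v(s) ≥ λ} ≥ ℓ} and, for m ∈ {1, …, d_K}, S_{K,m} := (1/(K·m))·Σ_{ℓ=1}^m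 j_{K,ℓ}. Then for all integers k, k′ ≥ 1 with d_k > 0 and d_{k′} > 0, and every m ∈ {1, …, d_k}, one has d_{k+k′} ≥ m and (k + k′)·S_{k+k′,m} ≥ k·S_{k,m} + k′·S_{k′,1}. -/
open Set

/-- The sublevel set `{s ∈ R_K : v(s) ≥ λ}` of the graded piece `𝒜 K`. -/
def gsublevel {A : Type*} [CommRing A] [Algebra ℂ A] (𝒜 : ℕ → Submodule ℂ A)
    (v : A → WithTop ℝ) (K : ℕ) (lam : ℝ) : Set A :=
  {s | s ∈ 𝒜 K ∧ (lam : WithTop ℝ) ≤ v s}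

section Aux

variable {A : Type*} [CommRing A] [IsDomain A] [Algebra ℂ A]
  (𝒜 : ℕ → Submodule ℂ A) (v : A → WithTop ℝ)
  (hv0 : v 0 = ⊤)
  (hvnn : ∀ x : A, x ≠ 0 → 0 ≤ v x)
  (hvmul : ∀ x y : A, v (x * y) = v x + v y)
  (hvadd : ∀ x y : A, min (v x) (v y) ≤ v (x + y))

/-- The sublevel set as a submodule. -/
def sublMod (K : ℕ) (lam : ℝ) : Submodule ℂ A where
  carrier := gsublevel 𝒜 v K lam
  add_mem' := by
    rintro a b ⟨haA, hav⟩ ⟨hbA, hbv⟩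
    exact ⟨(𝒜 K).add_mem haA hbA, le_trans (le_min hav hbv) (hvadd a b)⟩
  zero_mem' := ⟨(𝒜 K).zero_mem, by simp [gsublevel, hv0]⟩
  smul_mem' := by
    intro c s hs
    obtain ⟨hsA, hsv⟩ := hs
    rcases eq_or_ne c 0 with rfl | hc
    · rw [zero_smul]
      exact ⟨(𝒜 K).zero_mem, by simp [hv0]⟩
    · refine ⟨(𝒜 K).smul_mem c hsA, ?_⟩
      have h1 : algebraMap ℂ A c ≠ 0 := by
        have := (RingHom.injective (algebraMap ℂ A)).ne hc
        simpa using this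
      rw [Algebra.smul_def, hvmul]
      calc (lam : WithTop ℝ) = 0 + (lam : WithTop ℝ) := (zero_add _).symm
        _ ≤ v (algebraMap ℂ A c) + v s := add_le_add (hvnn _ h1) hsv

lemma sublMod_mem {K : ℕ} {lam : ℝ} {s : A} :
    s ∈ sublMod 𝒜 v hv0 hvnn hvmul hvadd K lam ↔ s ∈ 𝒜 K ∧ (lam : WithTop ℝ) ≤ v s :=
  Iff.rfl

lemma span_gsublevel (K : ℕ) (lam : ℝ) :
    Submodule.span ℂ (gsublevel 𝒜 v K lam) = sublMod 𝒜 v hv0 hvnn hvmul hvadd K lam := by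
  apply le_antisymm
  · rw [Submodule.span_le]
    intro s hs
    exact hs
  · intro s hs
    exact Submodule.subset_span hs

lemma sublMod_le (K : ℕ) (lam : ℝ) : sublMod 𝒜 v hv0 hvnn hvmul hvadd K lam ≤ 𝒜 K :=
  fun _ hs => hs.1

lemma sublMod_anti (K : ℕ) {lam lam' : ℝ} (h : lam ≤ lam') :
    sublMod 𝒜 v hv0 hvnn hvmul hvadd K lam' ≤ sublMod 𝒜 v hv0 hvnn hvmul hvadd K lam :=
  fun _ hs => ⟨hs.1, le_trans (WithTop.coe_le_coe.mpr h) hs.2⟩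

lemma sublMod_zero (K : ℕ) : sublMod 𝒜 v hv0 hvnn hvmul hvadd K 0 = 𝒜 K := by
  apply le_antisymm (sublMod_le 𝒜 v hv0 hvnn hvmul hvadd K 0)
  intro s hs
  refine ⟨hs, ?_⟩
  rcases eq_or_ne s 0 with rfl | h0
  · rw [hv0]; exact le_top
  · simpa using hvnn s h0

/-- finrank is monotone among submodules with finite-dimensional ambient bound. -/
lemma finrank_mono' {p q : Submodule ℂ A} (hpq : p ≤ q) (hq : FiniteDimensional ℂ q) :
    Module.finrank ℂ p ≤ Module.finrank ℂ q := by
  haveI := hq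
  exact LinearMap.finrank_le_finrank_of_injective (Submodule.inclusion_injective hpq)

lemma exists_ne_zero_of_finrank {p : Submodule ℂ A} (h : 1 ≤ Module.finrank ℂ p) :
    ∃ s ∈ p, s ≠ 0 := by
  by_contra hcon
  push_neg at hcon
  have : p = ⊥ := by
    rw [Submodule.eq_bot_iff]
    exact hcon
  rw [this, finrank_bot] at h
  omega

end Aux

theorem stmt14 (A : Type*) [CommRing A] [IsDomain A] [Algebra ℂ A]
    (𝒜 : ℕ → Submodule ℂ A) [GradedAlgebra 𝒜]
    (hfd : ∀ K : ℕ, FiniteDimensional ℂ (𝒜 K))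
    (v : A → WithTop ℝ)
    (hv0 : v 0 = ⊤)
    (hvfin : ∀ x : A, x ≠ 0 → v x ≠ ⊤)
    (hvnn : ∀ x : A, x ≠ 0 → 0 ≤ v x)
    (hvmul : ∀ x y : A, v (x * y) = v x + v y)
    (hvadd : ∀ x y : A, min (v x) (v y) ≤ v (x + y))
    (d : ℕ → ℕ) (hd : ∀ K, d K = Module.finrank ℂ (𝒜 K))
    (j : ℕ → ℕ → ℝ)
    (hj : ∀ K ℓ, j K ℓ = sSup {lam : ℝ | 0 ≤ lam ∧
        ℓ ≤ Module.finrank ℂ (Submodule.span ℂ (gsublevel 𝒜 v K lam))})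
    (S : ℕ → ℕ → ℝ)
    (hS : ∀ K m, S K m = (1 / ((K : ℝ) * (m : ℝ))) * ∑ ℓ ∈ Finset.range m, j K (ℓ + 1))
    (k k' : ℕ) (hk : 1 ≤ k) (hk' : 1 ≤ k') (hdk : 0 < d k) (hdk' : 0 < d k')
    (m : ℕ) (hm : 1 ≤ m) (hmd : m ≤ d k) :
    m ≤ d (k + k') ∧
    (k : ℝ) * S k m + (k' : ℝ) * S k' 1 ≤ ((k : ℝ) + (k' : ℝ)) * S (k + k') m := by
  classical
  set W : ℕ → ℝ → Submodule ℂ A := fun K lam => sublMod 𝒜 v hv0 hvnn hvmul hvadd K lam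
    with hWdef
  have hWfd : ∀ K lam, FiniteDimensional ℂ (W K lam) := fun K lam => by
    haveI := hfd K
    exact Submodule.finiteDimensional_of_le (sublMod_le 𝒜 v hv0 hvnn hvmul hvadd K lam)
  have hW0 : ∀ K, W K 0 = 𝒜 K := fun K => sublMod_zero 𝒜 v hv0 hvnn hvmul hvadd K
  -- key multiplication lemma
  have hmul_le : ∀ (K K' : ℕ) (a b : ℝ) (t : A), t ≠ 0 → t ∈ 𝒜 K' →
      (b : WithTop ℝ) ≤ v t →
      Module.finrank ℂ (W K a) ≤ Module.finrank ℂ (W (K + K') (a + b)) := by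
    intro K K' a b t ht htA htv
    have hinj : Function.Injective (fun s : A => t * s) := fun x y hxy => by
      exact mul_left_cancel₀ ht hxy
    let f : A →ₗ[ℂ] A := LinearMap.mulLeft ℂ t
    have hmaps : ∀ s ∈ W K a, f s ∈ W (K + K') (a + b) := by
      rintro s ⟨hsA, hsv⟩
      refine ⟨?_, ?_⟩
      · have := SetLike.mul_mem_graded htA hsA
        have hfs : f s = t * s := rfl
        rw [hfs, add_comm K K']
        exact this
      · have hfs : f s = t * s := rfl
        rw [hfs, hvmul]
        calc ((a + b : ℝ) : WithTop ℝ) = (b : WithTop ℝ) + (a : WithTop ℝ) := by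
              rw [← WithTop.coe_add, add_comm]
          _ ≤ v t + v s := add_le_add htv hsv
    let g : W K a →ₗ[ℂ] W (K + K') (a + b) := f.restrict hmaps
    have hginj : Function.Injective g := by
      intro x y hxy
      apply Subtype.ext
      apply hinj
      have := congrArg Subtype.val hxy
      exact this
    haveI := hWfd (K + K') (a + b)
    exact LinearMap.finrank_le_finrank_of_injective hginj
  -- the sets whose sup defines j
  set T : ℕ → ℕ → Set ℝ := fun K ℓ =>
    {lam : ℝ | 0 ≤ lam ∧ ℓ ≤ Module.finrank ℂ (W K lam)} with hTdef
  have hjT : ∀ K ℓ, j K ℓ = sSup (T K ℓ) := by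
    intro K ℓ
    rw [hj]
    congr 1
    ext lam
    simp only [Set.mem_setOf_eq, hTdef]
    rw [span_gsublevel 𝒜 v hv0 hvnn hvmul hvadd K lam]
  have hT0 : ∀ K ℓ, ℓ ≤ d K → (0 : ℝ) ∈ T K ℓ := by
    intro K ℓ hℓ
    refine ⟨le_refl 0, ?_⟩
    have e : Module.finrank ℂ (W K (0 : ℝ)) = Module.finrank ℂ (𝒜 K) := by
      rw [hW0 K]
    rw [e]
    rw [hd] at hℓ
    exact hℓ
  -- boundedness
  have hTbdd : ∀ K ℓ, 1 ≤ ℓ → BddAbove (T K ℓ) := by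
    intro K ℓ hℓ
    have hsub : T K ℓ ⊆ T K 1 := fun lam hlam => ⟨hlam.1, le_trans hℓ hlam.2⟩
    refine BddAbove.mono hsub ?_
    by_contra hb
    rw [not_bddAbove_iff] at hb
    have hg : ∀ n : ℕ, 1 ≤ Module.finrank ℂ (W K (n : ℝ)) := by
      intro n
      obtain ⟨lam, ⟨hlam0, hfl⟩, hlt⟩ := hb (n : ℝ)
      refine le_trans hfl (finrank_mono' (sublMod_anti 𝒜 v hv0 hvnn hvmul hvadd K hlt.le)
        (hWfd K _))
    set gfun : ℕ → ℕ := fun n => Module.finrank ℂ (W K (n : ℝ)) with hgdef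
    have hrange : (Set.range gfun).Nonempty := ⟨gfun 0, ⟨0, rfl⟩⟩
    obtain ⟨n0, hn0⟩ := Nat.sInf_mem hrange
    have hmin : ∀ n : ℕ, gfun n0 ≤ gfun n := by
      intro n
      rw [hn0]
      exact Nat.sInf_le ⟨n, rfl⟩
    have hstab : ∀ n : ℕ, n0 ≤ n → W K (n : ℝ) = W K (n0 : ℝ) := by
      intro n hn
      haveI := hWfd K (n0 : ℝ)
      refine Submodule.eq_of_le_of_finrank_le
        (sublMod_anti 𝒜 v hv0 hvnn hvmul hvadd K (by exact_mod_cast hn)) (hmin n)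
      -- instance
    obtain ⟨s, hsW, hs0⟩ := exists_ne_zero_of_finrank (hg n0)
    obtain ⟨r, hr⟩ := Option.ne_none_iff_exists'.mp (hvfin s hs0)
    have hle : ∀ n : ℕ, n0 ≤ n → (n : ℝ) ≤ r := by
      intro n hn
      have : s ∈ W K (n : ℝ) := by rw [hstab n hn]; exact hsW
      have h2 := this.2
      rw [hr] at h2
      have h3 : ((n : ℝ) : WithTop ℝ) ≤ (r : WithTop ℝ) := h2
      exact_mod_cast WithTop.coe_le_coe.mp h3
    obtain ⟨N, hN⟩ := exists_nat_gt r
    have := hle (max N n0) (le_max_right _ _)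
    have hNle : (N : ℝ) ≤ ((max N n0 : ℕ) : ℝ) := by exact_mod_cast le_max_left N n0
    linarith
  have hfdT : FiniteDimensional ℂ (𝒜 k') := hfd k'
  -- first part : d k ≤ d (k + k')
  obtain ⟨t0, ht0A, ht0⟩ := exists_ne_zero_of_finrank (p := 𝒜 k') (by rw [← hd]; exact hdk')
  have hdk_le : d k ≤ d (k + k') := by
    have h := hmul_le k k' 0 0 t0 ht0 ht0A (by simpa using hvnn t0 ht0)
    rw [show (0 : ℝ) + 0 = 0 by ring] at h
    rw [hW0, hW0] at h
    rw [hd, hd]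
    exact h
  have hmd' : m ≤ d (k + k') := le_trans hmd hdk_le
  refine ⟨hmd', ?_⟩
  -- key per-index inequality
  have key : ∀ ℓ : ℕ, 1 ≤ ℓ → ℓ ≤ d k → j k ℓ + j k' 1 ≤ j (k + k') ℓ := by
    intro ℓ h1 hℓ
    rw [hjT, hjT, hjT]
    have hne_a : (T k ℓ).Nonempty := ⟨0, hT0 k ℓ hℓ⟩
    have hne_b : (T k' 1).Nonempty := ⟨0, hT0 k' 1 hdk'⟩
    have hbdd_c : BddAbove (T (k + k') ℓ) := hTbdd (k + k') ℓ h1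
    have hmem : ∀ a ∈ T k ℓ, ∀ b ∈ T k' 1, a + b ∈ T (k + k') ℓ := by
      intro a ha b hb
      obtain ⟨t, htW, htne⟩ := exists_ne_zero_of_finrank (hb.2)
      exact ⟨add_nonneg ha.1 hb.1,
        le_trans ha.2 (hmul_le k k' a b t htne htW.1 htW.2)⟩
    have h1' : ∀ a ∈ T k ℓ, ∀ b ∈ T k' 1, a + b ≤ sSup (T (k + k') ℓ) :=
      fun a ha b hb => le_csSup hbdd_c (hmem a ha b hb)
    have h2 : ∀ a ∈ T k ℓ, sSup (T k' 1) ≤ sSup (T (k + k') ℓ) - a :=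
      fun a ha => csSup_le hne_b (fun b hb => by linarith [h1' a ha b hb])
    have h3 : sSup (T k ℓ) ≤ sSup (T (k + k') ℓ) - sSup (T k' 1) :=
      csSup_le hne_a (fun a ha => by linarith [h2 a ha])
    linarith
  -- sum inequality
  have hsum : (∑ ℓ ∈ Finset.range m, j k (ℓ + 1)) + (m : ℝ) * j k' 1 ≤
      ∑ ℓ ∈ Finset.range m, j (k + k') (ℓ + 1) := by
    have := Finset.sum_le_sum (f := fun ℓ => j k (ℓ + 1) + j k' 1)
      (g := fun ℓ => j (k + k') (ℓ + 1)) (s := Finset.range m)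
      (fun ℓ hℓ => key (ℓ + 1) (by omega)
        (by have := Finset.mem_range.mp hℓ; omega))
    rw [Finset.sum_add_distrib, Finset.sum_const, Finset.card_range,
      nsmul_eq_mul] at this
    linarith
  -- final arithmetic
  have hk0 : (0 : ℝ) < k := by exact_mod_cast hk
  have hk'0 : (0 : ℝ) < k' := by exact_mod_cast hk'
  have hm0 : (0 : ℝ) < m := by exact_mod_cast hm
  rw [hS, hS, hS]
  set a := ∑ ℓ ∈ Finset.range m, j k (ℓ + 1) with ha
  set b := ∑ ℓ ∈ Finset.range 1, j k' (ℓ + 1) with hb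
  set c := ∑ ℓ ∈ Finset.range m, j (k + k') (ℓ + 1) with hc
  have hb1 : b = j k' 1 := by rw [hb]; simp
  have e1 : (k : ℝ) * (1 / ((k : ℝ) * (m : ℝ)) * a) = a / m := by
    field_simp
  have e2 : (k' : ℝ) * (1 / ((k' : ℝ) * ((1 : ℕ) : ℝ)) * b) = b := by
    push_cast
    field_simp
  have e3 : ((k : ℝ) + (k' : ℝ)) * (1 / ((((k + k' : ℕ)) : ℝ) * (m : ℝ)) * c) = c / m := by
    push_cast
    have hkk : (0 : ℝ) < (k : ℝ) + (k' : ℝ) := by linarith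
    field_simp
  rw [e1, e2, e3, hb1]
  rw [div_add' _ _ _ (ne_of_gt hm0), div_le_div_iff_of_pos_right hm0]
  linarith [hsum]
end

section
/- Let R = ⊕_{K ≥ 0} R_K be a commutative ℕ-graded ℂ-algebra which is an integral domain, with each graded piece R_K finite-dimensional over ℂ. Let v : R → ℝ ∪ {+∞} satisfy: v(0) = +∞; 0 ≤ v(x) < +∞ for all x ≠ 0; v(xy) = v(x) + v(y) for all x, y; and v(x + y) ≥ min(v(x), v(y)) for all x, y. For K with d_K := dim_ℂ R_K > 0, ℓ ∈ {1, …, d_K}, define j_{K,ℓ} := max{λ ≥ 0 : dim {s ∈ R_K : v(s) ≥ λ} ≥ ℓ} and, for m ∈ {1, …, d_K}, S_{K,m} := (1/(K·m))·Σ_{ℓ=1}^m j_{K,ℓ}. Then for every integer k ≥ 1 with d_k > 0, every m ∈ {1, …, d_k}, and every integer ℓ ≥ 1, one has d_{ℓk} ≥ m and S_{k,m} ≤ S_{ℓk,m}. -/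
open Set

def gsubmod {A : Type*} [CommRing A] [IsDomain A] [Algebra ℂ A]
    (𝒜 : ℕ → Submodule ℂ A) (v : A → WithTop ℝ)
    (hv0 : v 0 = ⊤) (hvnn : ∀ x : A, x ≠ 0 → 0 ≤ v x)
    (hvmul : ∀ x y : A, v (x * y) = v x + v y)
    (hvadd : ∀ x y : A, min (v x) (v y) ≤ v (x + y))
    (K : ℕ) (lam : ℝ) : Submodule ℂ A where
  carrier := gsublevel 𝒜 v K lam
  zero_mem' := ⟨(𝒜 K).zero_mem, by rw [hv0]; exact le_top⟩
  add_mem' := fun ha hb =>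
    ⟨(𝒜 K).add_mem ha.1 hb.1, le_trans (le_min ha.2 hb.2) (hvadd _ _)⟩
  smul_mem' := by
    rintro c x ⟨hx1, hx2⟩
    refine ⟨(𝒜 K).smul_mem c hx1, ?_⟩
    rcases eq_or_ne c 0 with rfl | hc
    · rw [zero_smul, hv0]; exact le_top
    · rw [Algebra.smul_def, hvmul]
      have h0 : algebraMap ℂ A c ≠ 0 := by
        simpa using (RingHom.injective (algebraMap ℂ A)).ne_iff' (map_zero _) |>.mpr hc
      exact le_trans hx2 (le_add_of_nonneg_left (hvnn _ h0))

lemma span_gsublevel_s15 {A : Type*} [CommRing A] [IsDomain A] [Algebra ℂ A]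
    (𝒜 : ℕ → Submodule ℂ A) (v : A → WithTop ℝ)
    (hv0 : v 0 = ⊤) (hvnn : ∀ x : A, x ≠ 0 → 0 ≤ v x)
    (hvmul : ∀ x y : A, v (x * y) = v x + v y)
    (hvadd : ∀ x y : A, min (v x) (v y) ≤ v (x + y))
    (K : ℕ) (lam : ℝ) :
    Submodule.span ℂ (gsublevel 𝒜 v K lam) = gsubmod 𝒜 v hv0 hvnn hvmul hvadd K lam := by
  have h : (gsubmod 𝒜 v hv0 hvnn hvmul hvadd K lam : Set A) = gsublevel 𝒜 v K lam := rfl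
  rw [← h]
  exact Submodule.span_eq _


theorem stmt15 (A : Type*) [CommRing A] [IsDomain A] [Algebra ℂ A]
    (𝒜 : ℕ → Submodule ℂ A) [GradedAlgebra 𝒜]
    (hfd : ∀ K : ℕ, FiniteDimensional ℂ (𝒜 K))
    (v : A → WithTop ℝ)
    (hv0 : v 0 = ⊤)
    (hvfin : ∀ x : A, x ≠ 0 → v x ≠ ⊤)
    (hvnn : ∀ x : A, x ≠ 0 → 0 ≤ v x)
    (hvmul : ∀ x y : A, v (x * y) = v x + v y)
    (hvadd : ∀ x y : A, min (v x) (v y) ≤ v (x + y))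
    (d : ℕ → ℕ) (hd : ∀ K, d K = Module.finrank ℂ (𝒜 K))
    (j : ℕ → ℕ → ℝ)
    (hj : ∀ K ℓ, j K ℓ = sSup {lam : ℝ | 0 ≤ lam ∧
        ℓ ≤ Module.finrank ℂ (Submodule.span ℂ (gsublevel 𝒜 v K lam))})
    (S : ℕ → ℕ → ℝ)
    (hS : ∀ K m, S K m = (1 / ((K : ℝ) * (m : ℝ))) * ∑ ℓ ∈ Finset.range m, j K (ℓ + 1))
    (k : ℕ) (hk : 1 ≤ k) (hdk : 0 < d k)
    (m : ℕ) (hm : 1 ≤ m) (hmd : m ≤ d k)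
    (ℓ : ℕ) (hℓ : 1 ≤ ℓ) :
    m ≤ d (ℓ * k) ∧ S k m ≤ S (ℓ * k) m := by
  set G : ℕ → ℝ → Submodule ℂ A := gsubmod 𝒜 v hv0 hvnn hvmul hvadd with hG
  have hle : ∀ K (lam : ℝ), G K lam ≤ 𝒜 K := fun K lam x hx => hx.1
  have hfinG : ∀ K (lam : ℝ), FiniteDimensional ℂ (G K lam) := fun K lam => by
    haveI := hfd K
    exact Submodule.finiteDimensional_of_le (hle K lam)
  have hmono : ∀ (K : ℕ) (l1 l2 : ℝ), l1 ≤ l2 → G K l2 ≤ G K l1 := by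
    intro K l1 l2 h x hx
    exact ⟨hx.1, le_trans (WithTop.coe_le_coe.mpr h) hx.2⟩
  have hG0 : ∀ K, G K 0 = 𝒜 K := by
    intro K
    ext x
    constructor
    · exact fun h => h.1
    · intro hx
      refine ⟨hx, ?_⟩
      rcases eq_or_ne x 0 with rfl | h0
      · rw [hv0]; exact le_top
      · exact_mod_cast hvnn x h0
  have hv1 : v 1 = 0 := by
    have h := hvmul 1 1
    rw [mul_one] at h
    obtain ⟨r, hr⟩ := WithTop.ne_top_iff_exists.mp (hvfin 1 one_ne_zero)
    rw [← hr] at h ⊢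
    have hr2 : r = r + r := by exact_mod_cast h
    have : r = 0 := by linarith
    simp [this]
  -- global boundedness of v on each graded piece
  have hBdd : ∀ K : ℕ, ∃ B : ℝ, ∀ s, s ∈ 𝒜 K → s ≠ 0 → v s ≤ (B : WithTop ℝ) := by
    intro K
    by_contra hcon
    push_neg at hcon
    have hmem : ∀ n : ℕ, ∃ s, s ∈ G K (n : ℝ) ∧ s ≠ 0 := by
      intro n
      obtain ⟨s, hs1, hs2, hs3⟩ := hcon (n : ℝ)
      exact ⟨s, ⟨hs1, le_of_lt hs3⟩, hs2⟩
    obtain ⟨c, ⟨N, hN⟩, hcmin⟩ : ∃ c : ℕ, (∃ N : ℕ, Module.finrank ℂ (G K (N : ℝ)) = c) ∧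
        ∀ n : ℕ, c ≤ Module.finrank ℂ (G K (n : ℝ)) := by
      have hne : (Set.range fun n : ℕ => Module.finrank ℂ (G K (n : ℝ))).Nonempty :=
        ⟨_, ⟨0, rfl⟩⟩
      exact ⟨sInf _, Nat.sInf_mem hne, fun n => Nat.sInf_le ⟨n, rfl⟩⟩
    have heq : ∀ n : ℕ, N ≤ n → G K (n : ℝ) = G K (N : ℝ) := by
      intro n hn
      haveI := hfinG K (N : ℝ)
      exact Submodule.eq_of_le_of_finrank_le (hmono K _ _ (by exact_mod_cast hn))
        (by rw [hN]; exact hcmin n)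
    obtain ⟨s, hs, hs0⟩ := hmem N
    have hall : ∀ n : ℕ, ((n : ℝ) : WithTop ℝ) ≤ v s := by
      intro n
      have hsn : s ∈ G K ((max n N : ℕ) : ℝ) := (heq _ (le_max_right n N)) ▸ hs
      exact le_trans (WithTop.coe_le_coe.mpr (by exact_mod_cast le_max_left n N)) hsn.2
    obtain ⟨r, hr⟩ := WithTop.ne_top_iff_exists.mp (hvfin s hs0)
    obtain ⟨n, hn⟩ := exists_nat_gt r
    have h := hall n
    rw [← hr] at h
    exact absurd (WithTop.coe_le_coe.mp h) (not_le.mpr hn)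
  have hex : ∀ K (lam : ℝ), 1 ≤ Module.finrank ℂ (G K lam) → ∃ s, s ∈ G K lam ∧ s ≠ 0 := by
    intro K lam h
    apply Submodule.exists_mem_ne_zero_of_ne_bot
    intro hbot
    rw [hbot] at h
    simp [finrank_bot] at h
  have hj' : ∀ K i, j K i = sSup {lam : ℝ | 0 ≤ lam ∧ i ≤ Module.finrank ℂ (G K lam)} := by
    intro K i
    rw [hj]
    congr 1
    ext lam
    simp only [Set.mem_setOf_eq]
    rw [show Submodule.span ℂ (gsublevel 𝒜 v K lam) = G K lam from
      span_gsublevel_s15 𝒜 v hv0 hvnn hvmul hvadd K lam]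
  have hbdd : ∀ (K : ℕ) (i : ℕ), 1 ≤ i →
      BddAbove {lam : ℝ | 0 ≤ lam ∧ i ≤ Module.finrank ℂ (G K lam)} := by
    intro K i hi
    obtain ⟨B, hB⟩ := hBdd K
    refine ⟨B, fun lam hlam => ?_⟩
    obtain ⟨s, hs, hs0⟩ := hex K lam (le_trans hi hlam.2)
    exact WithTop.coe_le_coe.mp (le_trans hs.2 (hB s hs.1 hs0))
  have hpow : ∀ s1 : A, s1 ≠ 0 → ∀ lam1 : ℝ, (lam1 : WithTop ℝ) ≤ v s1 →
      ∀ n : ℕ, (((n : ℝ) * lam1 : ℝ) : WithTop ℝ) ≤ v (s1 ^ n) := by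
    intro s1 hs1 lam1 hv1' n
    induction n with
    | zero => simp [hv1]
    | succ n ih =>
      rw [pow_succ, hvmul]
      have hcast : (((n + 1 : ℕ) : ℝ) * lam1 : ℝ) = ((n : ℝ) * lam1) + lam1 := by
        push_cast; ring
      rw [hcast, WithTop.coe_add]
      exact add_le_add ih hv1'
  -- key step: multiplication by s1^(ℓ-1)
  have hkey : ∀ lam1 mu : ℝ, ∀ s1 : A, s1 ∈ 𝒜 k → s1 ≠ 0 → (lam1 : WithTop ℝ) ≤ v s1 →
      ∀ i : ℕ, i ≤ Module.finrank ℂ (G k mu) →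
      i ≤ Module.finrank ℂ (G (ℓ * k) (((ℓ - 1 : ℕ) : ℝ) * lam1 + mu)) := by
    intro lam1 mu s1 hs1m hs10 hs1v i hi
    have ha0 : s1 ^ (ℓ - 1) ≠ 0 := pow_ne_zero _ hs10
    have hamem : s1 ^ (ℓ - 1) ∈ 𝒜 ((ℓ - 1) * k) := by
      have h := SetLike.pow_mem_graded (ℓ - 1) hs1m
      simpa [smul_eq_mul] using h
    have hav : ((((ℓ - 1 : ℕ) : ℝ) * lam1 : ℝ) : WithTop ℝ) ≤ v (s1 ^ (ℓ - 1)) :=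
      hpow s1 hs10 lam1 hs1v (ℓ - 1)
    set φ : A →ₗ[ℂ] A := LinearMap.mulLeft ℂ (s1 ^ (ℓ - 1)) with hφ
    have hφapp : ∀ y : A, φ y = s1 ^ (ℓ - 1) * y := fun y => rfl
    have hinj : Function.Injective φ := by
      intro x y h
      rw [hφapp, hφapp] at h
      exact mul_left_cancel₀ ha0 h
    have hmap : (G k mu).map φ ≤ G (ℓ * k) (((ℓ - 1 : ℕ) : ℝ) * lam1 + mu) := by
      rintro x ⟨y, hy, rfl⟩
      have hy' : y ∈ 𝒜 k ∧ (mu : WithTop ℝ) ≤ v y := hy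
      refine ⟨?_, ?_⟩
      · have h := SetLike.mul_mem_graded hamem hy'.1
        have hnk : (ℓ - 1) * k + k = ℓ * k := by
          obtain ⟨ℓ', rfl⟩ : ∃ ℓ', ℓ = ℓ' + 1 := ⟨ℓ - 1, by omega⟩
          simp [Nat.add_mul]
        rw [hnk] at h
        rw [hφapp]
        exact h
      · rw [hφapp]
        rcases eq_or_ne y 0 with rfl | hy0
        · rw [mul_zero, hv0]; exact le_top
        · rw [hvmul, WithTop.coe_add]
          exact add_le_add hav hy'.2
    haveI := hfinG (ℓ * k) (((ℓ - 1 : ℕ) : ℝ) * lam1 + mu)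
    calc i ≤ Module.finrank ℂ (G k mu) := hi
      _ = Module.finrank ℂ ((G k mu).map φ) :=
          (Submodule.equivMapOfInjective φ hinj _).finrank_eq
      _ ≤ _ := Submodule.finrank_mono hmap
  -- part 1
  obtain ⟨s0, hs0m, hs00⟩ : ∃ s, s ∈ 𝒜 k ∧ s ≠ 0 := by
    apply Submodule.exists_mem_ne_zero_of_ne_bot
    intro hbot
    rw [hd k, hbot] at hdk
    simp [finrank_bot] at hdk
  have hs0v : ((0 : ℝ) : WithTop ℝ) ≤ v s0 := by exact_mod_cast hvnn s0 hs00
  have hd1 : m ≤ d (ℓ * k) := by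
    have h1 : m ≤ Module.finrank ℂ (G k 0) := by rw [hG0]; rw [hd] at hmd; exact hmd
    have h2 := hkey 0 0 s0 hs0m hs00 hs0v m h1
    rw [show (((ℓ - 1 : ℕ) : ℝ) * 0 + 0 : ℝ) = 0 by ring, hG0, ← hd] at h2
    exact h2
  refine ⟨hd1, ?_⟩
  -- part 2
  have hTne0 : ∀ i : ℕ, i ≤ m →
      (0 : ℝ) ∈ {lam : ℝ | 0 ≤ lam ∧ i ≤ Module.finrank ℂ (G k lam)} := by
    intro i him
    refine ⟨le_rfl, ?_⟩
    rw [hG0, ← hd]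
    omega
  have hstep : ∀ ε : ℝ, 0 < ε → ∀ i, 1 ≤ i → i ≤ m →
      (ℓ : ℝ) * j k i - ((ℓ : ℝ) + 1) * ε ≤ j (ℓ * k) i := by
    intro ε hε i hi1 him
    have hne1 : ({lam : ℝ | 0 ≤ lam ∧ 1 ≤ Module.finrank ℂ (G k lam)}).Nonempty :=
      ⟨0, hTne0 1 hm⟩
    have hnei : ({lam : ℝ | 0 ≤ lam ∧ i ≤ Module.finrank ℂ (G k lam)}).Nonempty :=
      ⟨0, hTne0 i him⟩
    obtain ⟨lam1, hlam1T, hlam1gt⟩ := exists_lt_of_lt_csSup hne1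
      (show j k 1 - ε < sSup {lam : ℝ | 0 ≤ lam ∧ 1 ≤ Module.finrank ℂ (G k lam)} by
        rw [← hj' k 1]; linarith)
    obtain ⟨lami, hlamiT, hlamigt⟩ := exists_lt_of_lt_csSup hnei
      (show j k i - ε < sSup {lam : ℝ | 0 ≤ lam ∧ i ≤ Module.finrank ℂ (G k lam)} by
        rw [← hj' k i]; linarith)
    have hlami_le : lami ≤ j k i := by
      rw [hj' k i]; exact le_csSup (hbdd k i hi1) hlamiT
    have hj1i : j k i ≤ j k 1 := by
      rw [hj' k i, hj' k 1]
      exact csSup_le_csSup (hbdd k 1 le_rfl) hnei (fun x hx => ⟨hx.1, le_trans hi1 hx.2⟩)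
    have hmuT : min lam1 lami ∈ {lam : ℝ | 0 ≤ lam ∧ i ≤ Module.finrank ℂ (G k lam)} := by
      refine ⟨le_min hlam1T.1 hlamiT.1, le_trans hlamiT.2 ?_⟩
      haveI := hfinG k (min lam1 lami)
      exact Submodule.finrank_mono (hmono k _ _ (min_le_right _ _))
    obtain ⟨s1, hs1, hs10⟩ := hex k lam1 hlam1T.2
    have hs1' : s1 ∈ 𝒜 k ∧ (lam1 : WithTop ℝ) ≤ v s1 := hs1
    have hkey' := hkey lam1 (min lam1 lami) s1 hs1'.1 hs10 hs1'.2 i hmuT.2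
    have hjge : ((ℓ - 1 : ℕ) : ℝ) * lam1 + min lam1 lami ≤ j (ℓ * k) i := by
      rw [hj' (ℓ * k) i]
      refine le_csSup (hbdd (ℓ * k) i hi1) ⟨?_, hkey'⟩
      have : (0 : ℝ) ≤ ((ℓ - 1 : ℕ) : ℝ) := Nat.cast_nonneg _
      nlinarith [hlam1T.1, hmuT.1]
    have hc : ((ℓ - 1 : ℕ) : ℝ) = (ℓ : ℝ) - 1 := by
      rw [Nat.cast_sub hℓ]; norm_num
    rw [hc] at hjge
    have hℓ1 : (1 : ℝ) ≤ (ℓ : ℝ) := by exact_mod_cast hℓ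
    have hmu_ge : lami - ε ≤ min lam1 lami :=
      le_min (by linarith) (by linarith)
    have hmul : ((ℓ : ℝ) - 1) * (j k i - ε) ≤ ((ℓ : ℝ) - 1) * lam1 :=
      mul_le_mul_of_nonneg_left (by linarith) (by linarith)
    nlinarith [hmul, hmu_ge, hlamigt, hjge]
  have hsum : (ℓ : ℝ) * ∑ i ∈ Finset.range m, j k (i + 1) ≤
      ∑ i ∈ Finset.range m, j (ℓ * k) (i + 1) := by
    by_contra hcon
    push_neg at hcon
    set Sa := ∑ i ∈ Finset.range m, j k (i + 1) with hSa
    set Sb := ∑ i ∈ Finset.range m, j (ℓ * k) (i + 1) with hSb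
    have hX : (0 : ℝ) < (ℓ : ℝ) * Sa - Sb := by linarith
    have hD : (0 : ℝ) < (m : ℝ) * ((ℓ : ℝ) + 1) + 1 := by positivity
    set ε := ((ℓ : ℝ) * Sa - Sb) / ((m : ℝ) * ((ℓ : ℝ) + 1) + 1) with hεdef
    have hεpos : 0 < ε := div_pos hX hD
    have h2 : ∑ i ∈ Finset.range m, ((ℓ : ℝ) * j k (i + 1) - ((ℓ : ℝ) + 1) * ε) ≤ Sb := by
      apply Finset.sum_le_sum
      intro i hi
      exact hstep ε hεpos (i + 1) (by omega) (by simpa using Finset.mem_range.mp hi)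
    rw [Finset.sum_sub_distrib, ← Finset.mul_sum, Finset.sum_const, Finset.card_range,
      nsmul_eq_mul] at h2
    have hlt : (m : ℝ) * (((ℓ : ℝ) + 1) * ε) < (ℓ : ℝ) * Sa - Sb := by
      have h3 : (m : ℝ) * ((ℓ : ℝ) + 1) < (m : ℝ) * ((ℓ : ℝ) + 1) + 1 := by linarith
      have h4 := mul_lt_mul_of_pos_right h3 hεpos
      have h5 : ((m : ℝ) * ((ℓ : ℝ) + 1) + 1) * ε = (ℓ : ℝ) * Sa - Sb := by
        rw [hεdef, mul_div_cancel₀ _ (ne_of_gt hD)]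
      calc (m : ℝ) * (((ℓ : ℝ) + 1) * ε) = ((m : ℝ) * ((ℓ : ℝ) + 1)) * ε := by ring
        _ < ((m : ℝ) * ((ℓ : ℝ) + 1) + 1) * ε := h4
        _ = (ℓ : ℝ) * Sa - Sb := h5
    linarith
  rw [hS, hS]
  have hkpos : (0 : ℝ) < (k : ℝ) := by exact_mod_cast hk
  have hmpos : (0 : ℝ) < (m : ℝ) := by exact_mod_cast hm
  have hℓpos : (0 : ℝ) < (ℓ : ℝ) := by exact_mod_cast hℓ
  have hcast : ((ℓ * k : ℕ) : ℝ) = (ℓ : ℝ) * (k : ℝ) := by push_cast; ring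
  rw [hcast]
  rw [div_mul_eq_mul_div, div_mul_eq_mul_div, div_le_div_iff₀ (by positivity) (by positivity)]
  nlinarith [mul_le_mul_of_nonneg_right hsum (le_of_lt (mul_pos hkpos hmpos))]
end
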